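/- arXiv:2006.16193 — 5 statements merged into one kernel-verified Lean document; each statement's English description precedes it below -/
import Mathlib

section
/- Let d ≥ 1, let m ∈ ℝ^d with m ≠ 0, and let 0 < ε ≤ ‖m‖/(16√d). Let π be the two-component Gaussian mixture density π(x) = (1/2)ε^{−d}φ(x/ε) + (1/2)ε^{−d}φ((x−m)/ε). Then there exists a bounded smooth function f : ℝ^d → ℝ with 0 < ∫ ‖∇f(x)‖² π(x) dx < ∞ such that var_π(f) ≥ (ε⁴/(80‖m‖²)) · exp(‖m‖²/(64ε²)) · ∫ ‖∇f(x)‖² π(x) dx; consequently the optimal Poincaré constant κ of π (the least κ with var_π(g) ≤ κ∫‖∇g‖²π dx for all admissible g) satisfies κ ≥ (ε⁴/(80‖m‖²)) exp(‖m‖²/(64ε²)). -/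
open MeasureTheory RealInnerProductSpace

noncomputable section

abbrev Euc (d : ℕ) := EuclideanSpace ℝ (Fin d)

def IsDensity {d : ℕ} (ρ : Euc d → ℝ) : Prop :=
  (∀ x, 0 ≤ ρ x) ∧ ∫ x, ρ x = 1

def lap {d : ℕ} (f : Euc d → ℝ) (x : Euc d) : ℝ :=
  ∑ i : Fin d, fderiv ℝ (fun y => fderiv ℝ f y (EuclideanSpace.single i 1)) x (EuclideanSpace.single i 1)

def LGen {d : ℕ} (ν V : Euc d → ℝ) (x : Euc d) : ℝ :=
  ⟪gradient V x, gradient (fun y => Real.log (ν y)) x⟫ + lap V x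

structure IsLyapunov {d : ℕ} (ν V : Euc d → ℝ) (lam h : ℝ) (B : Set (Euc d)) (C : ℝ) : Prop where
  contDiff : ContDiff ℝ 2 V
  one_le : ∀ x, 1 ≤ V x
  lam_pos : 0 < lam
  h_pos : 0 < h
  C_pos : 0 < C
  bounded : Bornology.IsBounded B
  drift : ∀ x, LGen ν V x ≤ -lam * V x + h * B.indicator 1 x
  ratio : ∀ x ∈ B, ∀ y ∈ B, ν x ≤ C * ν y

def uball {d : ℕ} (x₀ : Euc d) (R : ℝ) (x : Euc d) : ℝ :=
  (Metric.closedBall x₀ R).indicator (fun _ => ((volume (Metric.closedBall x₀ R)).toReal)⁻¹) x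

def IsLyDensity {d : ℕ} (ν : Euc d → ℝ) (x₀ : Euc d) (R q a : ℝ) : Prop :=
  ∃ V lam h C, IsLyapunov ν V lam h (Metric.closedBall x₀ R) C ∧
    (1 + h * R ^ 2 * C ^ 2) / lam ≤ q ∧
    ∀ x ∈ Metric.closedBall x₀ R, uball x₀ R x ≤ a * ν x

def Vball (d : ℕ) : ℝ := (volume (Metric.closedBall (0 : Euc d) 1)).toReal

def IsLogConcave {d : ℕ} (ν : Euc d → ℝ) (c L : ℝ) : Prop :=
  ContDiff ℝ 2 (fun x => -Real.log (ν x)) ∧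
  (∀ x y : Euc d, c * ‖x - y‖ ^ 2 ≤
      ⟪gradient (fun z => -Real.log (ν z)) x - gradient (fun z => -Real.log (ν z)) y, x - y⟫) ∧
  (∀ x : Euc d, ‖fderiv ℝ (fun z => gradient (fun w => -Real.log (ν w)) z) x‖ ≤ L)

def GammaR {d : ℕ} (π πy : Euc d → ℝ) (τ ρ : ℝ) (f : Euc d × Euc d → ℝ) (x y : Euc d) : ℝ :=
  ‖gradient (fun x' => f (x', y)) x‖ ^ 2 + τ * ‖gradient (fun y' => f (x, y')) y‖ ^ 2 +
    (ρ / 2) * min 1 (π y * πy x / (π x * πy y)) * (f (y, x) - f (x, y)) ^ 2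



lemma aux_inv_cosh_le (z : ℝ) : 1 / Real.cosh z ≤ 2 * Real.exp z := by
  have h := Real.cosh_pos z
  rw [div_le_iff₀ h, Real.cosh_eq]
  have h1 : Real.exp z * Real.exp (-z) = 1 := by rw [← Real.exp_add]; simp
  nlinarith [Real.exp_pos z, Real.exp_pos (-z)]

lemma aux_exp_sq (z : ℝ) : Real.exp z ^ 2 = Real.exp (2 * z) := by
  rw [show (2:ℝ) * z = z + z by ring, Real.exp_add, sq]

lemma aux_inv_cosh_sq_le (z : ℝ) : (1 / Real.cosh z) ^ 2 ≤ 4 * Real.exp (2 * z) := by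
  calc (1 / Real.cosh z) ^ 2 ≤ (2 * Real.exp z) ^ 2 := by
        apply pow_le_pow_left₀ (by positivity) (aux_inv_cosh_le z)
    _ = 4 * Real.exp (2 * z) := by rw [mul_pow, aux_exp_sq]; ring

lemma aux_inv_cosh_sq_le' (z : ℝ) : (1 / Real.cosh z) ^ 2 ≤ 4 * Real.exp ((-2) * z) := by
  have := aux_inv_cosh_sq_le (-z)
  rw [Real.cosh_neg] at this
  convert this using 3
  ring

lemma aux_inv_cosh_pow4_le (z : ℝ) : (1 / Real.cosh z) ^ 4 ≤ 16 * Real.exp (4 * z) := by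
  calc (1 / Real.cosh z) ^ 4 = ((1 / Real.cosh z) ^ 2) ^ 2 := by ring
    _ ≤ (4 * Real.exp (2 * z)) ^ 2 := by
        apply pow_le_pow_left₀ (by positivity) (aux_inv_cosh_sq_le z)
    _ = 16 * Real.exp (4 * z) := by rw [mul_pow, aux_exp_sq]; ring_nf

lemma aux_inv_cosh_pow4_le' (z : ℝ) : (1 / Real.cosh z) ^ 4 ≤ 16 * Real.exp ((-4) * z) := by
  have := aux_inv_cosh_pow4_le (-z)
  rw [Real.cosh_neg] at this
  convert this using 3
  ring

lemma aux_abs_sinh_le (z : ℝ) : |Real.sinh z| ≤ Real.cosh z := by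
  rw [abs_le, Real.sinh_eq, Real.cosh_eq]
  constructor <;> nlinarith [Real.exp_pos z, Real.exp_pos (-z)]

lemma gauss_base_integrable (d : ℕ) {b : ℝ} (hb : 0 < b) :
    Integrable (fun x : Euc d => Real.exp (-b * ‖x‖ ^ 2)) := by
  have h := GaussianFourier.integrable_cexp_neg_mul_sq_norm_add (V := Euc d) (b := (b : ℂ))
    (by simpa using hb) 0 0
  have h2 := h.re
  refine h2.congr (Filter.Eventually.of_forall fun x => ?_)
  simp [← Complex.ofReal_pow, ← Complex.ofReal_neg, ← Complex.ofReal_mul, Complex.exp_ofReal_re]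

lemma gauss_eval (d : ℕ) {b : ℝ} (hb : 0 < b) (w x₀ : Euc d) :
    Integrable (fun x : Euc d => Real.exp (⟪w, x⟫ - b * ‖x - x₀‖ ^ 2)) ∧
    ∫ x : Euc d, Real.exp (⟪w, x⟫ - b * ‖x - x₀‖ ^ 2)
      = Real.exp (⟪w, x₀⟫ + ‖w‖ ^ 2 / (4 * b)) * (Real.pi / b) ^ ((d : ℝ) / 2) := by
  have hb' : b ≠ 0 := ne_of_gt hb
  set c : Euc d := x₀ + (2 * b)⁻¹ • w with hc
  have key : ∀ x : Euc d, ⟪w, x⟫ - b * ‖x - x₀‖ ^ 2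
      = (⟪w, x₀⟫ + ‖w‖ ^ 2 / (4 * b)) + (-b * ‖x - c‖ ^ 2) := by
    intro x
    have hxc : x - c = (x - x₀) - (2 * b)⁻¹ • w := by rw [hc]; abel
    have expand : ‖x - c‖ ^ 2
        = ‖x - x₀‖ ^ 2 - 2 * ((2 * b)⁻¹ * ⟪x - x₀, w⟫) + ((2 * b)⁻¹) ^ 2 * ‖w‖ ^ 2 := by
      rw [hxc, @norm_sub_sq_real, real_inner_smul_right, norm_smul]
      rw [Real.norm_eq_abs, abs_of_pos (by positivity), mul_pow]
    have hinner : ⟪x - x₀, w⟫ = ⟪w, x⟫ - ⟪w, x₀⟫ := by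
      rw [inner_sub_left, real_inner_comm x w, real_inner_comm x₀ w]
    rw [expand, hinner]; field_simp; ring
  have base := gauss_base_integrable d hb
  have trans_int : Integrable (fun x : Euc d => Real.exp (-b * ‖x - c‖ ^ 2)) :=
    base.comp_sub_right c
  have hfun : (fun x : Euc d => Real.exp (⟪w, x⟫ - b * ‖x - x₀‖ ^ 2))
      = fun x => Real.exp (⟪w, x₀⟫ + ‖w‖ ^ 2 / (4 * b)) * Real.exp (-b * ‖x - c‖ ^ 2) := by
    funext x; rw [key x, Real.exp_add]
  constructor
  · rw [hfun]; exact trans_int.const_mul _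
  · rw [hfun, integral_const_mul]
    congr 1
    have htr : ∫ x : Euc d, Real.exp (-b * ‖x - c‖ ^ 2)
        = ∫ x : Euc d, Real.exp (-b * ‖x‖ ^ 2) := by
      simp_rw [sub_eq_add_neg]
      exact integral_add_right_eq_self (fun x : Euc d => Real.exp (-b * ‖x‖ ^ 2)) (-c)
    rw [htr, GaussianFourier.integral_rexp_neg_mul_sq_norm hb]
    congr 2
    simp [finrank_euclideanSpace_fin]

/-- the linear functional used in the test function -/
def mixL {d : ℕ} (m : Euc d) (a : ℝ) : Euc d → ℝ := fun x => a * ⟪m, x⟫ - a * ‖m‖ ^ 2 / 2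

/-- the test function: a hyperbolic-tangent sigmoid along `m` -/
def mixF {d : ℕ} (m : Euc d) (a : ℝ) : Euc d → ℝ :=
  fun x => Real.sinh (mixL m a x) / Real.cosh (mixL m a x)

lemma mixL_cont {d : ℕ} (m : Euc d) (a : ℝ) : Continuous (mixL m a) :=
  (continuous_const.mul (Continuous.inner continuous_const continuous_id)).sub continuous_const

lemma mixL_neg {d : ℕ} (m : Euc d) (a : ℝ) (x : Euc d) :
    mixL m a (m - x) = - mixL m a x := by
  unfold mixL
  rw [inner_sub_right, real_inner_self_eq_norm_sq]
  ring

lemma mixF_neg {d : ℕ} (m : Euc d) (a : ℝ) (x : Euc d) :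
    mixF m a (m - x) = - mixF m a x := by
  unfold mixF
  rw [mixL_neg, Real.sinh_neg, Real.cosh_neg, neg_div]

lemma mixF_abs_le {d : ℕ} (m : Euc d) (a : ℝ) (x : Euc d) : |mixF m a x| ≤ 1 := by
  unfold mixF
  rw [abs_div, abs_of_pos (Real.cosh_pos _), div_le_one (Real.cosh_pos _)]
  exact aux_abs_sinh_le _

lemma mixF_contDiff {d : ℕ} (m : Euc d) (a : ℝ) : ContDiff ℝ (⊤ : ℕ∞) (mixF m a) := by
  have hℓ : ContDiff ℝ (⊤ : ℕ∞) (mixL m a) :=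
    (contDiff_const.mul (ContDiff.inner ℝ contDiff_const contDiff_id)).sub contDiff_const
  exact (Real.contDiff_sinh.comp hℓ).div (Real.contDiff_cosh.comp hℓ)
    fun x => (Real.cosh_pos _).ne'

lemma mixF_sq {d : ℕ} (m : Euc d) (a : ℝ) (x : Euc d) :
    mixF m a x ^ 2 = 1 - (1 / Real.cosh (mixL m a x)) ^ 2 := by
  unfold mixF
  have h := (Real.cosh_pos (mixL m a x)).ne'
  rw [div_pow, div_pow, one_pow, Real.sinh_sq]
  field_simp

lemma mixF_hasGradient {d : ℕ} (m : Euc d) (a : ℝ) (x : Euc d) :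
    HasGradientAt (mixF m a) (((1 / Real.cosh (mixL m a x)) ^ 2 * a) • m) x := by
  rw [hasGradientAt_iff_hasFDerivAt]
  have hℓ : HasFDerivAt (mixL m a) (a • (innerSL ℝ m)) x :=
    (((innerSL ℝ m).hasFDerivAt).const_mul a).sub_const _
  have htanh : HasDerivAt (fun w => Real.sinh w / Real.cosh w)
      ((1 / Real.cosh (mixL m a x)) ^ 2) (mixL m a x) := by
    have h : HasDerivAt (fun w => Real.sinh w / Real.cosh w) _ (mixL m a x) := (Real.hasDerivAt_sinh (mixL m a x)).div (Real.hasDerivAt_cosh (mixL m a x))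
      (Real.cosh_pos (mixL m a x)).ne'
    convert h using 1
    rw [div_pow, one_pow]
    congr 1
    linear_combination - Real.cosh_sq_sub_sinh_sq (mixL m a x)
  have hF := htanh.comp_hasFDerivAt x hℓ
  refine hF.congr_fderiv ?_
  ext y
  simp [InnerProductSpace.toDual_apply_apply, real_inner_smul_left]
  ring

lemma mixF_gradient_normsq {d : ℕ} (m : Euc d) {a : ℝ} (ha : 0 ≤ a) (x : Euc d) :
    ‖gradient (mixF m a) x‖ ^ 2
      = a ^ 2 * ‖m‖ ^ 2 * (1 / Real.cosh (mixL m a x)) ^ 4 := by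
  rw [(mixF_hasGradient m a x).gradient, norm_smul, Real.norm_eq_abs,
    abs_of_nonneg (by positivity), mul_pow]
  ring

lemma aux_small {M ε : ℝ} (hε : 0 < ε) (h256 : 256 * ε ^ 2 ≤ M ^ 2) :
    4 * Real.exp (-(3 * M ^ 2 / (32 * ε ^ 2))) ≤ 1 / 2 := by
  have harg : -(3 * M ^ 2 / (32 * ε ^ 2)) ≤ -24 := by
    rw [neg_le_neg_iff, le_div_iff₀ (by positivity)]
    nlinarith [h256]
  have h1 : Real.exp (-(3 * M ^ 2 / (32 * ε ^ 2))) ≤ Real.exp (-24) :=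
    Real.exp_le_exp.mpr harg
  have h8 : (8:ℝ) ≤ Real.exp 24 := by nlinarith [Real.add_one_le_exp (24:ℝ)]
  have hx : Real.exp (-24 : ℝ) * Real.exp (24 : ℝ) = 1 := by
    rw [← Real.exp_add]; norm_num
  have h2 : Real.exp (-24 : ℝ) ≤ 1 / 8 := by
    nlinarith [Real.exp_pos (-24 : ℝ), h8, hx]
  linarith

lemma aux_one_le_sqrt {x : ℝ} (hx : 1 ≤ x) : 1 ≤ Real.sqrt x := by
  nlinarith [Real.sq_sqrt (by linarith : (0:ℝ) ≤ x), Real.sqrt_nonneg x]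

lemma aux_M_ge {ε M s : ℝ} (hε : 0 < ε) (hs : 1 ≤ s) (hM : ε ≤ M / (16 * s)) :
    256 * ε ^ 2 ≤ M ^ 2 := by
  have hpos : 0 < 16 * s := by positivity
  rw [le_div_iff₀ hpos] at hM
  have h16 : 16 * ε ≤ M := by nlinarith [hε, hs, hM]
  nlinarith [h16, hε.le]

set_option maxHeartbeats 1000000 in
/-- lower bound for the Poincaré constant of a mixture of two
well-separated singular Gaussians: there is a bounded smooth test function whose
variance-to-Dirichlet-energy ratio is at least `(ε⁴/(80‖m‖²))·exp(‖m‖²/(64ε²))`. -/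
theorem gaussian_mixture_poincare_lower_bound
    (d : ℕ) (hd : 1 ≤ d) (m : Euc d) (hm : m ≠ 0)
    (ε : ℝ) (hε : 0 < ε) (hεm : ε ≤ ‖m‖ / (16 * Real.sqrt d))
    (φ : Euc d → ℝ)
    (hφ : ∀ x, φ x = (2 * Real.pi) ^ (-(d : ℝ) / 2) * Real.exp (-‖x‖ ^ 2 / 2))
    (π : Euc d → ℝ)
    (hπ : ∀ x, π x = (1 / 2) * ε ^ (-(d : ℝ)) * φ (ε⁻¹ • x)
        + (1 / 2) * ε ^ (-(d : ℝ)) * φ (ε⁻¹ • (x - m))) :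
    ∃ f : Euc d → ℝ,
      ContDiff ℝ (⊤ : ℕ∞) f ∧ (∃ Cb : ℝ, ∀ x, |f x| ≤ Cb) ∧
      Integrable (fun x => ‖gradient f x‖ ^ 2 * π x) ∧
      0 < ∫ x, ‖gradient f x‖ ^ 2 * π x ∧
      (ε ^ 4 / (80 * ‖m‖ ^ 2)) * Real.exp (‖m‖ ^ 2 / (64 * ε ^ 2)) *
          ∫ x, ‖gradient f x‖ ^ 2 * π x
        ≤ ∫ x, (f x - ∫ y, f y * π y) ^ 2 * π x := by
  have hM : 0 < ‖m‖ := norm_pos_iff.mpr hm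
  have hε' : ε ≠ 0 := ne_of_gt hε
  set M := ‖m‖ with hMdef
  set a : ℝ := (8 * ε ^ 2)⁻¹ with hadef
  have ha : 0 < a := by positivity
  set b : ℝ := (2 * ε ^ 2)⁻¹ with hbdef
  have hb : 0 < b := by positivity
  set g : Euc d → Euc d → ℝ := fun x₀ x => Real.exp (-b * ‖x - x₀‖ ^ 2) with hgdef
  set N : ℝ := (1 / 2) * ε ^ (-(d:ℝ)) * (2 * Real.pi) ^ (-(d:ℝ)/2) with hNdef
  have hN : 0 < N := by
    have h1 : (0:ℝ) < ε ^ (-(d:ℝ)) := Real.rpow_pos_of_pos hε _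
    have h2 : (0:ℝ) < (2 * Real.pi) ^ (-(d:ℝ)/2) :=
      Real.rpow_pos_of_pos (by positivity) _
    rw [hNdef]; positivity
  set G : ℝ := (Real.pi / b) ^ ((d:ℝ)/2) with hGdef
  have hGpos : 0 < G := Real.rpow_pos_of_pos (by positivity) _
  -- the mixture density in Gaussian form
  have hπ' : ∀ x, π x = N * (g 0 x + g m x) := by
    intro x
    rw [hπ x, hφ, hφ]
    have key : ∀ y : Euc d, Real.exp (-‖ε⁻¹ • y‖ ^ 2 / 2) = Real.exp (-b * ‖y‖ ^ 2) := by
      intro y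
      congr 1
      rw [norm_smul, Real.norm_eq_abs, abs_of_pos (by positivity), mul_pow, hbdef]
      rw [inv_pow, mul_inv]
      ring
    rw [key x, key (x - m)]
    simp only [hgdef, hNdef, sub_zero]
    ring
  have hπpos : ∀ x, 0 < π x := fun x => by
    rw [hπ' x]
    have h1 : 0 < g 0 x := Real.exp_pos _
    have h2 : 0 < g m x := Real.exp_pos _
    positivity
  -- Gaussian component integrals with exponential tilt exp(c • mixL)
  have comp : ∀ (c : ℝ) (x₀ : Euc d),
      Integrable (fun x : Euc d => Real.exp (c * mixL m a x) * g x₀ x) ∧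
      ∫ x : Euc d, Real.exp (c * mixL m a x) * g x₀ x
        = Real.exp (c * a * ⟪m, x₀⟫ - c * a * M ^ 2 / 2
            + c ^ 2 * a ^ 2 * M ^ 2 * ε ^ 2 / 2) * G := by
    intro c x₀
    obtain ⟨hint, heq⟩ := gauss_eval d hb ((c * a) • m) x₀
    have hpt : ∀ x : Euc d, Real.exp (c * mixL m a x) * g x₀ x
        = Real.exp (-(c * a * M ^ 2 / 2)) * Real.exp (⟪(c * a) • m, x⟫ - b * ‖x - x₀‖ ^ 2) := by
      intro x
      simp only [hgdef]
      rw [← Real.exp_add, ← Real.exp_add]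
      congr 1
      rw [real_inner_smul_left]
      unfold mixL
      rw [← hMdef]
      ring
    constructor
    · exact (hint.const_mul _).congr (Filter.Eventually.of_forall fun x => (hpt x).symm)
    · calc ∫ x : Euc d, Real.exp (c * mixL m a x) * g x₀ x
          = ∫ x : Euc d, Real.exp (-(c * a * M ^ 2 / 2))
              * Real.exp (⟪(c * a) • m, x⟫ - b * ‖x - x₀‖ ^ 2) :=
            integral_congr_ae (Filter.Eventually.of_forall hpt)
        _ = Real.exp (-(c * a * M ^ 2 / 2))
              * (Real.exp (⟪(c * a) • m, x₀⟫ + ‖(c * a) • m‖ ^ 2 / (4 * b)) * G) := by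
            rw [integral_const_mul, heq, hGdef]
        _ = _ := by
            rw [← mul_assoc, ← Real.exp_add]
            congr 2
            rw [real_inner_smul_left, norm_smul, Real.norm_eq_abs, mul_pow, sq_abs,
              ← hMdef, hbdef]
            field_simp
            ring
  -- integrability and value of the plain components
  have hgint : ∀ x₀ : Euc d, Integrable (g x₀) := by
    intro x₀
    have h := (comp 0 x₀).1
    refine h.congr (Filter.Eventually.of_forall fun x => ?_)
    simp
  have hgval : ∀ x₀ : Euc d, ∫ x, g x₀ x = G := by
    intro x₀
    have h := (comp 0 x₀).2
    simpa using h
  have hπint : Integrable π :=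
    (((hgint 0).add (hgint m)).const_mul N).congr
      (Filter.Eventually.of_forall fun x => (hπ' x).symm)
  have hNG : N * G = 1 / 2 := by
    have hπb : Real.pi / b = (2 * Real.pi) * ε ^ 2 := by rw [hbdef]; field_simp
    have h1 : ((ε:ℝ) ^ 2) ^ ((d:ℝ)/2) = ε ^ (d:ℝ) := by
      rw [← Real.rpow_natCast ε 2, ← Real.rpow_mul hε.le]
      congr 1
      ring
    have h2 : ε ^ (-(d:ℝ)) * ε ^ (d:ℝ) = 1 := by
      rw [← Real.rpow_add hε]; simp
    have h3 : (2*Real.pi) ^ (-(d:ℝ)/2) * (2*Real.pi) ^ ((d:ℝ)/2) = 1 := by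
      rw [← Real.rpow_add (by positivity)]; ring_nf; simp
    have hGval : G = (2*Real.pi) ^ ((d:ℝ)/2) * ε ^ (d:ℝ) := by
      rw [hGdef, hπb, Real.mul_rpow (by positivity) (by positivity), h1]
    rw [hNdef, hGval]
    calc (1/2) * ε ^ (-(d:ℝ)) * (2*Real.pi) ^ (-(d:ℝ)/2)
          * ((2*Real.pi) ^ ((d:ℝ)/2) * ε ^ (d:ℝ))
        = (1/2) * (ε ^ (-(d:ℝ)) * ε ^ (d:ℝ))
            * ((2*Real.pi) ^ (-(d:ℝ)/2) * (2*Real.pi) ^ ((d:ℝ)/2)) := by ring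
      _ = 1/2 := by rw [h2, h3]; ring
  have hπone : ∫ x, π x = 1 := by
    calc ∫ x, π x = ∫ x, N * (g 0 x + g m x) :=
          integral_congr_ae (Filter.Eventually.of_forall hπ')
      _ = N * (G + G) := by
          rw [integral_const_mul, integral_add (hgint 0) (hgint m), hgval 0, hgval m]
      _ = 1 := by linear_combination 2 * hNG
  -- domination bounds for the cosh integrals
  have compLe : ∀ (c C : ℝ) (k : ℕ) (x₀ : Euc d), 0 ≤ C →
      (∀ z, (1 / Real.cosh z) ^ k ≤ C * Real.exp (c * z)) →
      Integrable (fun x => (1 / Real.cosh (mixL m a x)) ^ k * g x₀ x) ∧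
      ∫ x, (1 / Real.cosh (mixL m a x)) ^ k * g x₀ x
        ≤ C * (Real.exp (c * a * ⟪m, x₀⟫ - c * a * M ^ 2 / 2
            + c ^ 2 * a ^ 2 * M ^ 2 * ε ^ 2 / 2) * G) := by
    intro c C k x₀ hC hzb
    obtain ⟨hint, heq⟩ := comp c x₀
    have hgcont : Continuous (g x₀) := by
      simp only [hgdef]; fun_prop
    have hcont : Continuous fun x => (1 / Real.cosh (mixL m a x)) ^ k * g x₀ x :=
      (((continuous_const.div (Real.continuous_cosh.comp (mixL_cont m a))
        fun x => (Real.cosh_pos _).ne').pow k).mul hgcont)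
    have hgpos : ∀ x, 0 < g x₀ x := fun x => Real.exp_pos _
    have hnn : ∀ x, 0 ≤ (1 / Real.cosh (mixL m a x)) ^ k * g x₀ x := fun x =>
      mul_nonneg (pow_nonneg (by positivity) k) (hgpos x).le
    have hle : ∀ x, (1 / Real.cosh (mixL m a x)) ^ k * g x₀ x
        ≤ C * (Real.exp (c * mixL m a x) * g x₀ x) := by
      intro x
      have h := mul_le_mul_of_nonneg_right (hzb (mixL m a x)) (hgpos x).le
      calc (1 / Real.cosh (mixL m a x)) ^ k * g x₀ x
          ≤ C * Real.exp (c * mixL m a x) * g x₀ x := h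
        _ = C * (Real.exp (c * mixL m a x) * g x₀ x) := by ring
    have hint2 : Integrable (fun x => C * (Real.exp (c * mixL m a x) * g x₀ x)) :=
      hint.const_mul C
    refine ⟨hint2.mono' hcont.aestronglyMeasurable
      (Filter.Eventually.of_forall fun x => ?_), ?_⟩
    · rw [Real.norm_eq_abs, abs_of_nonneg (hnn x)]; exact hle x
    · calc ∫ x, (1 / Real.cosh (mixL m a x)) ^ k * g x₀ x
          ≤ ∫ x, C * (Real.exp (c * mixL m a x) * g x₀ x) :=
            integral_mono_of_nonneg (Filter.Eventually.of_forall hnn) hint2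
              (Filter.Eventually.of_forall hle)
        _ = C * _ := by rw [integral_const_mul, heq]
  -- exponent arithmetic
  have expo2 : (2:ℝ) * a * ⟪m, (0:Euc d)⟫ - 2 * a * M ^ 2 / 2
      + 2 ^ 2 * a ^ 2 * M ^ 2 * ε ^ 2 / 2 = -(3 * M ^ 2 / (32 * ε ^ 2)) := by
    rw [inner_zero_right, hadef]; field_simp; ring
  have expo2m : (-2:ℝ) * a * ⟪m, m⟫ - (-2) * a * M ^ 2 / 2
      + (-2) ^ 2 * a ^ 2 * M ^ 2 * ε ^ 2 / 2 = -(3 * M ^ 2 / (32 * ε ^ 2)) := by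
    rw [real_inner_self_eq_norm_sq, ← hMdef, hadef]; field_simp; ring
  have expo4 : (4:ℝ) * a * ⟪m, (0:Euc d)⟫ - 4 * a * M ^ 2 / 2
      + 4 ^ 2 * a ^ 2 * M ^ 2 * ε ^ 2 / 2 = -(M ^ 2 / (8 * ε ^ 2)) := by
    rw [inner_zero_right, hadef]; field_simp; ring
  have expo4m : (-4:ℝ) * a * ⟪m, m⟫ - (-4) * a * M ^ 2 / 2
      + (-4) ^ 2 * a ^ 2 * M ^ 2 * ε ^ 2 / 2 = -(M ^ 2 / (8 * ε ^ 2)) := by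
    rw [real_inner_self_eq_norm_sq, ← hMdef, hadef]; field_simp; ring
  have b20 := compLe 2 4 2 0 (by norm_num) aux_inv_cosh_sq_le
  have b2m := compLe (-2) 4 2 m (by norm_num) aux_inv_cosh_sq_le'
  have b40 := compLe 4 16 4 0 (by norm_num) aux_inv_cosh_pow4_le
  have b4m := compLe (-4) 16 4 m (by norm_num) aux_inv_cosh_pow4_le'
  -- mixture bounds
  have hsplit : ∀ k : ℕ,
      Integrable (fun x => (1 / Real.cosh (mixL m a x)) ^ k * g 0 x) →
      Integrable (fun x => (1 / Real.cosh (mixL m a x)) ^ k * g m x) →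
      Integrable (fun x => (1 / Real.cosh (mixL m a x)) ^ k * π x) ∧
      ∫ x, (1 / Real.cosh (mixL m a x)) ^ k * π x
        = N * (∫ x, (1 / Real.cosh (mixL m a x)) ^ k * g 0 x)
          + N * (∫ x, (1 / Real.cosh (mixL m a x)) ^ k * g m x) := by
    intro k h0 hm'
    have heq : (fun x => (1 / Real.cosh (mixL m a x)) ^ k * π x)
        = fun x => N * ((1 / Real.cosh (mixL m a x)) ^ k * g 0 x)
          + N * ((1 / Real.cosh (mixL m a x)) ^ k * g m x) := by
      funext x; rw [hπ' x]; ring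
    constructor
    · rw [heq]; exact (h0.const_mul N).add (hm'.const_mul N)
    · rw [heq, integral_add (h0.const_mul N) (hm'.const_mul N),
        integral_const_mul, integral_const_mul]
  obtain ⟨hI2int, hI2split⟩ := hsplit 2 b20.1 b2m.1
  obtain ⟨hI4int, hI4split⟩ := hsplit 4 b40.1 b4m.1
  have hI2 : ∫ x, (1 / Real.cosh (mixL m a x)) ^ 2 * π x
      ≤ 4 * Real.exp (-(3 * M ^ 2 / (32 * ε ^ 2))) := by
    have h0 := b20.2; rw [expo2] at h0
    have hm' := b2m.2; rw [expo2m] at hm'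
    rw [hI2split]
    calc N * (∫ x, (1 / Real.cosh (mixL m a x)) ^ 2 * g 0 x)
          + N * (∫ x, (1 / Real.cosh (mixL m a x)) ^ 2 * g m x)
        ≤ N * (4 * (Real.exp (-(3 * M ^ 2 / (32 * ε ^ 2))) * G))
          + N * (4 * (Real.exp (-(3 * M ^ 2 / (32 * ε ^ 2))) * G)) :=
          add_le_add (mul_le_mul_of_nonneg_left h0 hN.le)
            (mul_le_mul_of_nonneg_left hm' hN.le)
      _ = 8 * (N * G) * Real.exp (-(3 * M ^ 2 / (32 * ε ^ 2))) := by ring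
      _ = 4 * Real.exp (-(3 * M ^ 2 / (32 * ε ^ 2))) := by rw [hNG]; ring
  have hI4 : ∫ x, (1 / Real.cosh (mixL m a x)) ^ 4 * π x
      ≤ 16 * Real.exp (-(M ^ 2 / (8 * ε ^ 2))) := by
    have h0 := b40.2; rw [expo4] at h0
    have hm' := b4m.2; rw [expo4m] at hm'
    rw [hI4split]
    calc N * (∫ x, (1 / Real.cosh (mixL m a x)) ^ 4 * g 0 x)
          + N * (∫ x, (1 / Real.cosh (mixL m a x)) ^ 4 * g m x)
        ≤ N * (16 * (Real.exp (-(M ^ 2 / (8 * ε ^ 2))) * G))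
          + N * (16 * (Real.exp (-(M ^ 2 / (8 * ε ^ 2))) * G)) :=
          add_le_add (mul_le_mul_of_nonneg_left h0 hN.le)
            (mul_le_mul_of_nonneg_left hm' hN.le)
      _ = 32 * (N * G) * Real.exp (-(M ^ 2 / (8 * ε ^ 2))) := by ring
      _ = 16 * Real.exp (-(M ^ 2 / (8 * ε ^ 2))) := by rw [hNG]; ring
  -- size of M relative to ε
  have h256 : 256 * ε ^ 2 ≤ M ^ 2 :=
    aux_M_ge hε (aux_one_le_sqrt (by exact_mod_cast hd)) hεm
  -- energy integrand
  have hEeq : (fun x => ‖gradient (mixF m a) x‖ ^ 2 * π x)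
      = fun x => a ^ 2 * M ^ 2 * ((1 / Real.cosh (mixL m a x)) ^ 4 * π x) := by
    funext x
    rw [mixF_gradient_normsq m ha.le x, ← hMdef]
    ring
  have hEint : Integrable (fun x => ‖gradient (mixF m a) x‖ ^ 2 * π x) := by
    rw [hEeq]; exact hI4int.const_mul _
  have hEval : ∫ x, ‖gradient (mixF m a) x‖ ^ 2 * π x
      = a ^ 2 * M ^ 2 * ∫ x, (1 / Real.cosh (mixL m a x)) ^ 4 * π x := by
    rw [hEeq, integral_const_mul]
  have hEpos : 0 < ∫ x, ‖gradient (mixF m a) x‖ ^ 2 * π x := by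
    have hpos : ∀ x, 0 < a ^ 2 * M ^ 2 * ((1 / Real.cosh (mixL m a x)) ^ 4 * π x) := by
      intro x
      have h1 := Real.cosh_pos (mixL m a x)
      have h2 := hπpos x
      positivity
    rw [hEeq]
    refine (integral_pos_iff_support_of_nonneg (fun x => (hpos x).le) ?_).mpr ?_
    · exact hI4int.const_mul _
    · have hsupp : Function.support
          (fun x => a ^ 2 * M ^ 2 * ((1 / Real.cosh (mixL m a x)) ^ 4 * π x)) = Set.univ :=
        Set.eq_univ_of_forall fun x => (hpos x).ne'
      rw [hsupp]
      exact isOpen_univ.measure_pos volume ⟨0, trivial⟩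
  -- zero mean by symmetry
  have hmean : ∫ y, mixF m a y * π y = 0 := by
    have hodd : ∀ x, mixF m a (m - x) * π (m - x) = -(mixF m a x * π x) := by
      intro x
      have h2 : π (m - x) = π x := by
        rw [hπ' (m - x), hπ' x]
        have e1 : m - x - 0 = -(x - m) := by abel
        have e2 : m - x - m = -(x - 0) := by abel
        simp only [hgdef, e1, e2, norm_neg]
        ring
      rw [mixF_neg, h2]; ring
    have key : ∫ x, mixF m a x * π x = - ∫ x, mixF m a x * π x := by
      conv_lhs => rw [← integral_sub_left_eq_self (fun x => mixF m a x * π x) volume m]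
      calc ∫ x, mixF m a (m - x) * π (m - x)
          = ∫ x, -(mixF m a x * π x) := integral_congr_ae (Filter.Eventually.of_forall hodd)
        _ = - ∫ x, mixF m a x * π x := integral_neg _
    linarith [key]
  -- the variance
  have hvar_eq : ∫ x, (mixF m a x - ∫ y, mixF m a y * π y) ^ 2 * π x
      = ∫ x, (π x - (1 / Real.cosh (mixL m a x)) ^ 2 * π x) := by
    rw [hmean]
    refine integral_congr_ae (Filter.Eventually.of_forall fun x => ?_)
    show (mixF m a x - 0) ^ 2 * π x = π x - (1 / Real.cosh (mixL m a x)) ^ 2 * π x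
    rw [sub_zero, mixF_sq]
    ring
  have hsmall : 4 * Real.exp (-(3 * M ^ 2 / (32 * ε ^ 2))) ≤ 1 / 2 := aux_small hε h256
  have hvar_ge : (1:ℝ) / 2 ≤ ∫ x, (mixF m a x - ∫ y, mixF m a y * π y) ^ 2 * π x := by
    rw [hvar_eq, integral_sub hπint hI2int, hπone]
    have h12 : ∫ x, (1 / Real.cosh (mixL m a x)) ^ 2 * π x ≤ 1 / 2 := hI2.trans hsmall
    linarith [h12]
  -- conclusion
  refine ⟨mixF m a, mixF_contDiff m a, ⟨1, mixF_abs_le m a⟩, hEint, hEpos, ?_⟩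
  have hEb : ∫ x, ‖gradient (mixF m a) x‖ ^ 2 * π x
      ≤ a ^ 2 * M ^ 2 * (16 * Real.exp (-(M ^ 2 / (8 * ε ^ 2)))) := by
    rw [hEval]
    exact mul_le_mul_of_nonneg_left hI4 (by positivity)
  have hKnn : 0 ≤ ε ^ 4 / (80 * M ^ 2) * Real.exp (M ^ 2 / (64 * ε ^ 2)) := by positivity
  have hmid : ε ^ 4 / (80 * M ^ 2) * Real.exp (M ^ 2 / (64 * ε ^ 2))
      * (a ^ 2 * M ^ 2 * (16 * Real.exp (-(M ^ 2 / (8 * ε ^ 2))))) ≤ 1 / 2 := by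
    have heq : ε ^ 4 / (80 * M ^ 2) * Real.exp (M ^ 2 / (64 * ε ^ 2))
        * (a ^ 2 * M ^ 2 * (16 * Real.exp (-(M ^ 2 / (8 * ε ^ 2)))))
        = (1 / 320) * (Real.exp (M ^ 2 / (64 * ε ^ 2))
            * Real.exp (-(M ^ 2 / (8 * ε ^ 2)))) := by
      rw [hadef]; field_simp; ring
    have hprod : Real.exp (M ^ 2 / (64 * ε ^ 2)) * Real.exp (-(M ^ 2 / (8 * ε ^ 2)))
        = Real.exp (-(7 * M ^ 2 / (64 * ε ^ 2))) := by
      rw [← Real.exp_add]; congr 1; field_simp; ring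
    have hle1 : Real.exp (-(7 * M ^ 2 / (64 * ε ^ 2))) ≤ 1 := by
      rw [Real.exp_le_one_iff]
      have h0 : 0 ≤ 7 * M ^ 2 / (64 * ε ^ 2) := by positivity
      linarith [h0]
    rw [heq, hprod]
    calc (1 / 320 : ℝ) * Real.exp (-(7 * M ^ 2 / (64 * ε ^ 2)))
        ≤ (1 / 320 : ℝ) * 1 := mul_le_mul_of_nonneg_left hle1 (by norm_num)
      _ ≤ 1 / 2 := by norm_num
  calc ε ^ 4 / (80 * M ^ 2) * Real.exp (M ^ 2 / (64 * ε ^ 2))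
        * ∫ x, ‖gradient (mixF m a) x‖ ^ 2 * π x
      ≤ ε ^ 4 / (80 * M ^ 2) * Real.exp (M ^ 2 / (64 * ε ^ 2))
        * (a ^ 2 * M ^ 2 * (16 * Real.exp (-(M ^ 2 / (8 * ε ^ 2))))) :=
        mul_le_mul_of_nonneg_left hEb hKnn
    _ ≤ 1 / 2 := hmid
    _ ≤ ∫ x, (mixF m a x - ∫ y, mixF m a y * π y) ^ 2 * π x := hvar_ge

end
end

section
/- Let ν be a (c,L)-log-concave density on ℝ^d with mode m (i.e., ∇(−log ν)(m) = 0). Then V(x) = (c/d)‖x−m‖² + 1 is a (λ, h, B, C)-Lyapunov function for ν with λ = c, h = 3c, B = B(m, √(3d/c)), and C = exp(3dL/(2c)). Consequently, ν is an Ly(r, q, a)-density with center m, where r = √(3d/c), q = c^{−1} + (9d/c)·exp(3dL/c), and a = (1/V_d)·exp(3Ld/(2c))·(4π/(3d))^{d/2}, V_d being the volume of the d-dimensional unit ball. -/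
open MeasureTheory RealInnerProductSpace

noncomputable section

/-!
Write `H = -log ν`. Strong convexity and `∇H m = 0` give `⟪∇H x, x - m⟫ ≥ c‖x - m‖²`, while
`L_ν V = 2(c/d)(d - ⟪∇H x, x - m⟫)`; so the drift of `V` is at most `2c - 2c(V - 1)`, which is
below `-cV` as soon as `(c/d)‖x - m‖² ≥ 3`, i.e. outside the ball of radius `√(3d/c)`.
Integrating `∇H` along segments from `m` gives `c/2‖x - m‖² ≤ H x - H m ≤ L/2‖x - m‖²`. The upper
bound controls the oscillation of `ν` on the ball; the lower bound dominates `ν` by a Gaussian of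
variance `1/c` peaked at `ν m`, so `ν m ≥ (c/2π)^(d/2)`, which against the volume
`(3d/c)^(d/2) V_d` of the ball bounds `u_B / ν`.
-/

section Calculus

variable {F : Type*} [NormedAddCommGroup F] [InnerProductSpace ℝ F]

theorem hasFDerivAt_mul_norm_sub_sq_add (a b : ℝ) (m x : F) :
    HasFDerivAt (fun y => a * ‖y - m‖ ^ 2 + b) ((2 * a) • innerSL ℝ (x - m)) x :=
  ((((hasFDerivAt_id x).sub_const m).norm_sq.const_mul a).add_const b).congr_fderiv <| by
    ext v
    simp
    ring

variable [CompleteSpace F]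

theorem gradient_mul_norm_sub_sq_add (a b : ℝ) (m x : F) :
    gradient (fun y => a * ‖y - m‖ ^ 2 + b) x = (2 * a) • (x - m) := by
  refine HasGradientAt.gradient ?_
  rw [hasGradientAt_iff_hasFDerivAt, map_smul]
  exact hasFDerivAt_mul_norm_sub_sq_add a b m x

theorem gradient_neg (f : F → ℝ) (x : F) : gradient (fun y => -f y) x = -gradient f x := by
  rw [gradient, fderiv_fun_neg, map_neg, gradient]

theorem ContDiff.differentiable_gradient {H : F → ℝ} (hH : ContDiff ℝ 2 H) :
    Differentiable ℝ (gradient H) :=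
  (InnerProductSpace.toDual ℝ F).symm.differentiable.comp
    ((hH.fderiv_right (m := 1) (by norm_num)).differentiable (by norm_num))

theorem norm_gradient_sub_le {H : F → ℝ} (hH : ContDiff ℝ 2 H) {L : ℝ}
    (hL : ∀ x, ‖fderiv ℝ (gradient H) x‖ ≤ L) (x y : F) :
    ‖gradient H x - gradient H y‖ ≤ L * ‖x - y‖ :=
  convex_univ.norm_image_sub_le_of_norm_fderiv_le (fun z _ => hH.differentiable_gradient z)
    (fun z _ => hL z) (Set.mem_univ y) (Set.mem_univ x)

theorem hasDerivAt_comp_add_smul {H : F → ℝ} (hH : Differentiable ℝ H) (m v : F) (t : ℝ) :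
    HasDerivAt (fun s : ℝ => H (m + s • v)) ⟪gradient H (m + t • v), v⟫ t := by
  rw [inner_gradient_left]
  exact (hH _).hasFDerivAt.comp_hasDerivAt t
    ((((hasDerivAt_id t).smul_const v).const_add m).congr_deriv (one_smul ℝ v))

end Calculus

theorem add_half_mul_le_of_hasDerivAt {f f' : ℝ → ℝ} {k : ℝ}
    (hf : ∀ t, HasDerivAt f (f' t) t) (hk : ∀ t ∈ Set.Ioo (0 : ℝ) 1, k * t ≤ f' t) :
    f 0 + k / 2 ≤ f 1 := by
  have hg : ∀ t, HasDerivAt (fun s => f s - k / 2 * s ^ 2) (f' t - k * t) t := fun t =>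
    ((hf t).sub ((hasDerivAt_pow 2 t).const_mul (k / 2))).congr_deriv (by norm_num; ring)
  have hmono : MonotoneOn (fun s => f s - k / 2 * s ^ 2) (Set.Icc 0 1) :=
    monotoneOn_of_hasDerivWithinAt_nonneg (convex_Icc 0 1)
      (fun t _ => (hg t).continuousAt.continuousWithinAt) (fun t _ => (hg t).hasDerivWithinAt)
      (fun t ht => by rw [interior_Icc] at ht; linarith [hk t ht])
  have := hmono (Set.left_mem_Icc.2 zero_le_one) (Set.right_mem_Icc.2 zero_le_one) zero_le_one
  simp only at this
  linarith

section QuadraticBounds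

variable {F : Type*} [NormedAddCommGroup F] [InnerProductSpace ℝ F] [CompleteSpace F]
  {H : F → ℝ} {m : F}

theorem add_half_mul_norm_sub_sq_le {c : ℝ} (hH : Differentiable ℝ H)
    (hcoer : ∀ x, c * ‖x - m‖ ^ 2 ≤ ⟪gradient H x, x - m⟫) (y : F) :
    H m + c / 2 * ‖y - m‖ ^ 2 ≤ H y := by
  have key := add_half_mul_le_of_hasDerivAt (k := c * ‖y - m‖ ^ 2)
    (hasDerivAt_comp_add_smul hH m (y - m)) fun t ht => by
      have h := hcoer (m + t • (y - m))
      rw [add_sub_cancel_left, norm_smul, real_inner_smul_right, Real.norm_of_nonneg ht.1.le] at h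
      nlinarith [ht.1]
  simpa [mul_div_right_comm] using key

theorem le_add_half_mul_norm_sub_sq {L : ℝ} (hH : Differentiable ℝ H)
    (hlip : ∀ x, ‖gradient H x‖ ≤ L * ‖x - m‖) (y : F) :
    H y ≤ H m + L / 2 * ‖y - m‖ ^ 2 := by
  have key := add_half_mul_le_of_hasDerivAt (k := -(L * ‖y - m‖ ^ 2))
    (fun t => (hasDerivAt_comp_add_smul hH m (y - m) t).neg) fun t ht => by
      have h := hlip (m + t • (y - m))
      rw [add_sub_cancel_left, norm_smul, Real.norm_of_nonneg ht.1.le] at h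
      have := real_inner_le_norm (gradient H (m + t • (y - m))) (y - m)
      nlinarith [norm_nonneg (y - m)]
  simp only [Pi.neg_apply, zero_smul, add_zero, one_smul, add_sub_cancel] at key
  linarith

end QuadraticBounds

open Real in
theorem le_exp_mul_of_neg_log_le {a b k : ℝ} (ha : 0 < a) (hb : 0 < b)
    (h : -log a ≤ -log b + k) : b ≤ exp k * a :=
  calc b = exp (log b) := (exp_log hb).symm
    _ ≤ exp (k + log a) := exp_le_exp.2 (by linarith)
    _ = exp k * a := by rw [exp_add, exp_log ha]

section Densities

variable {F : Type*} [NormedAddCommGroup F] {ν : F → ℝ} {m : F}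

theorem le_exp_mul_of_mem_closedBall {L R : ℝ} (hL : 0 ≤ L) (hmax : ∀ y, ν y ≤ ν m)
    (hgrowth : ∀ y, ν m ≤ Real.exp (L / 2 * ‖y - m‖ ^ 2) * ν y) (hν : ∀ y, 0 ≤ ν y)
    (x : F) {y : F} (hy : y ∈ Metric.closedBall m R) :
    ν x ≤ Real.exp (L / 2 * R ^ 2) * ν y := by
  rw [mem_closedBall_iff_norm] at hy
  calc ν x ≤ ν m := hmax x
    _ ≤ Real.exp (L / 2 * ‖y - m‖ ^ 2) * ν y := hgrowth y
    _ ≤ Real.exp (L / 2 * R ^ 2) * ν y := mul_le_mul_of_nonneg_right (by gcongr) (hν y)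

variable [InnerProductSpace ℝ F] [FiniteDimensional ℝ F] [MeasurableSpace F] [BorelSpace F]

theorem inv_rpow_le_of_le_exp_mul {b : ℝ} (hb : 0 < b) (hν : ∫ x, ν x = 1)
    (hdecay : ∀ y, ν y ≤ Real.exp (-b * ‖y - m‖ ^ 2) * ν m) :
    ((Real.pi / b) ^ (Module.finrank ℝ F / 2 : ℝ))⁻¹ ≤ ν m := by
  have hgauss := GaussianFourier.integral_rexp_neg_mul_sq_norm (V := F) hb
  have hint : Integrable fun y : F => Real.exp (-b * ‖y - m‖ ^ 2) :=
    (Integrable.of_integral_ne_zero (by rw [hgauss]; positivity)).comp_sub_right m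
  rw [inv_le_iff_one_le_mul₀ (by positivity), ← hν, ← hgauss, mul_comm,
    ← integral_sub_right_eq_self (fun y => Real.exp (-b * ‖y‖ ^ 2)) m, ← integral_mul_const]
  exact integral_mono (Integrable.of_integral_ne_zero (by rw [hν]; exact one_ne_zero))
    (hint.mul_const _) hdecay

end Densities

theorem inv_sqrt_pow_le {d : ℕ} (hd : 1 ≤ d) {c : ℝ} (hc : 0 < c) :
    (Real.sqrt (3 * d / c) ^ d)⁻¹ ≤
      (4 * Real.pi / (3 * d)) ^ ((d : ℝ) / 2) * ((Real.pi / (c / 2)) ^ ((d : ℝ) / 2))⁻¹ := by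
  have hd0 : (0 : ℝ) < d := by exact_mod_cast hd
  rw [← Real.rpow_natCast, ← Real.rpow_div_two_eq_sqrt _ (by positivity),
    ← Real.inv_rpow (by positivity), ← Real.inv_rpow (by positivity),
    ← Real.mul_rpow (by positivity) (by positivity)]
  gcongr
  field_simp
  nlinarith [Real.pi_pos]

section Euclidean

variable {d : ℕ}

theorem lap_mul_norm_sub_sq_add (a b : ℝ) (m x : Euc d) :
    lap (fun y => a * ‖y - m‖ ^ 2 + b) x = 2 * a * d := by
  have hfd : ∀ (e y : Euc d), fderiv ℝ (fun y => a * ‖y - m‖ ^ 2 + b) y e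
      = 2 * a * ⟪e, y - m⟫ := fun e y => by
    rw [(hasFDerivAt_mul_norm_sub_sq_add a b m y).fderiv, real_inner_comm]; rfl
  have hsecond : ∀ e : Euc d,
      HasFDerivAt (fun y => 2 * a * ⟪e, y - m⟫) ((2 * a) • innerSL ℝ e) x := fun e =>
    ((innerSL ℝ e).hasFDerivAt.comp x ((hasFDerivAt_id x).sub_const m)).const_mul (2 * a)
  simp only [lap, hfd, (hsecond _).fderiv]
  simp
  ring

theorem uball_of_mem {x₀ x : Euc d} {R : ℝ} (hR : 0 ≤ R)
    (hx : x ∈ Metric.closedBall x₀ R) : uball x₀ R x = (R ^ d * Vball d)⁻¹ := by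
  rw [uball, Set.indicator_of_mem hx, ← measureReal_def, Measure.addHaar_real_closedBall' _ _ hR,
    finrank_euclideanSpace_fin, Vball, measureReal_def]

theorem LGen_mul_norm_sub_sq_add (ν : Euc d → ℝ) (a b : ℝ) (m x : Euc d) :
    LGen ν (fun y => a * ‖y - m‖ ^ 2 + b) x
      = 2 * a * (d - ⟪gradient (fun z => -Real.log (ν z)) x, x - m⟫) := by
  have hlog : (fun y => Real.log (ν y)) = fun y => -(-Real.log (ν y)) := by simp only [neg_neg]
  rw [LGen, gradient_mul_norm_sub_sq_add, lap_mul_norm_sub_sq_add, hlog, gradient_neg,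
    inner_neg_right, real_inner_smul_left, real_inner_comm]
  ring

theorem LGen_le_of_le_inner_gradient {ν : Euc d → ℝ} {c : ℝ} {m : Euc d} (hd : 1 ≤ d)
    (hc : 0 < c)
    (hcoer : ∀ x, c * ‖x - m‖ ^ 2 ≤ ⟪gradient (fun z => -Real.log (ν z)) x, x - m⟫)
    (x : Euc d) :
    LGen ν (fun y => c / d * ‖y - m‖ ^ 2 + 1) x ≤
      -c * (c / d * ‖x - m‖ ^ 2 + 1) +
        3 * c * (Metric.closedBall m (Real.sqrt (3 * d / c))).indicator 1 x := by
  have hd0 : (0 : ℝ) < d := by exact_mod_cast hd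
  have hdrift : 2 * (c / d) * (d - ⟪gradient (fun z => -Real.log (ν z)) x, x - m⟫)
      ≤ 2 * c - 2 * c * (c / d * ‖x - m‖ ^ 2) := by
    have := mul_le_mul_of_nonneg_left (hcoer x) (by positivity : (0 : ℝ) ≤ 2 * (c / d))
    field_simp at this ⊢
    linarith
  rw [LGen_mul_norm_sub_sq_add]
  by_cases hB : x ∈ Metric.closedBall m (Real.sqrt (3 * d / c))
  · rw [Set.indicator_of_mem hB, Pi.one_apply]
    nlinarith [mul_nonneg hc.le (by positivity : (0 : ℝ) ≤ c / d * ‖x - m‖ ^ 2)]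
  · rw [Set.indicator_of_notMem hB]
    rw [mem_closedBall_iff_norm, not_le, Real.sqrt_lt (by positivity) (norm_nonneg _)] at hB
    have : 3 < c / d * ‖x - m‖ ^ 2 :=
      calc 3 = c / d * (3 * d / c) := by field_simp
        _ < c / d * ‖x - m‖ ^ 2 := by gcongr
    nlinarith

theorem Vball_pos (d : ℕ) : 0 < Vball d :=
  ENNReal.toReal_pos (Metric.measure_closedBall_pos volume 0 one_pos).ne'
    measure_closedBall_lt_top.ne

theorem uball_le_mul {ν : Euc d → ℝ} {m x : Euc d} {c C : ℝ} (hd : 1 ≤ d) (hc : 0 < c)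
    (hν : ∫ y, ν y = 1) (hdecay : ∀ y, ν y ≤ Real.exp (-(c / 2) * ‖y - m‖ ^ 2) * ν m)
    (hx : x ∈ Metric.closedBall m (Real.sqrt (3 * d / c))) (hνx : ν m ≤ C * ν x) :
    uball m (Real.sqrt (3 * d / c)) x ≤
      (Vball d)⁻¹ * C * (4 * Real.pi / (3 * d)) ^ ((d : ℝ) / 2) * ν x := by
  have hνm := inv_rpow_le_of_le_exp_mul (by positivity) hν hdecay
  rw [finrank_euclideanSpace_fin] at hνm
  have hV := (Vball_pos d).le
  rw [uball_of_mem (Real.sqrt_nonneg _) hx, mul_inv, mul_comm]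
  calc (Vball d)⁻¹ * (Real.sqrt (3 * d / c) ^ d)⁻¹
      ≤ (Vball d)⁻¹ * ((4 * Real.pi / (3 * d)) ^ ((d : ℝ) / 2) * ν m) := by
        gcongr
        exact (inv_sqrt_pow_le hd hc).trans (by gcongr)
    _ ≤ (Vball d)⁻¹ * ((4 * Real.pi / (3 * d)) ^ ((d : ℝ) / 2) * (C * ν x)) := by gcongr
    _ = (Vball d)⁻¹ * C * (4 * Real.pi / (3 * d)) ^ ((d : ℝ) / 2) * ν x := by ring

end Euclidean

section LogConcave

variable {d : ℕ} {ν : Euc d → ℝ} {c L : ℝ} {m : Euc d}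

theorem IsLogConcave.le_inner_gradient (hlc : IsLogConcave ν c L)
    (hm : gradient (fun z => -Real.log (ν z)) m = 0) (x : Euc d) :
    c * ‖x - m‖ ^ 2 ≤ ⟪gradient (fun z => -Real.log (ν z)) x, x - m⟫ := by
  simpa [hm] using hlc.2.1 x m

theorem IsLogConcave.norm_gradient_le (hlc : IsLogConcave ν c L)
    (hm : gradient (fun z => -Real.log (ν z)) m = 0) (x : Euc d) :
    ‖gradient (fun z => -Real.log (ν z)) x‖ ≤ L * ‖x - m‖ := by
  simpa [hm] using norm_gradient_sub_le hlc.1 hlc.2.2 x m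

theorem IsLogConcave.le_exp_neg_mul (hlc : IsLogConcave ν c L)
    (hm : gradient (fun z => -Real.log (ν z)) m = 0) (hνpos : ∀ x, 0 < ν x) (y : Euc d) :
    ν y ≤ Real.exp (-(c / 2) * ‖y - m‖ ^ 2) * ν m :=
  le_exp_mul_of_neg_log_le (hνpos m) (hνpos y) <| by
    linarith [add_half_mul_norm_sub_sq_le (hlc.1.differentiable two_ne_zero)
      (hlc.le_inner_gradient hm) y]

theorem IsLogConcave.le_exp_mul (hlc : IsLogConcave ν c L)
    (hm : gradient (fun z => -Real.log (ν z)) m = 0) (hνpos : ∀ x, 0 < ν x) (y : Euc d) :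
    ν m ≤ Real.exp (L / 2 * ‖y - m‖ ^ 2) * ν y :=
  le_exp_mul_of_neg_log_le (hνpos y) (hνpos m) <|
    le_add_half_mul_norm_sub_sq (hlc.1.differentiable two_ne_zero) (hlc.norm_gradient_le hm) y

end LogConcave

theorem logconcave_lyapunov_general
    (d : ℕ) (hd : 1 ≤ d) (c L : ℝ) (hc : 0 < c)
    (ν : Euc d → ℝ) (hν : IsDensity ν) (hνpos : ∀ x, 0 < ν x)
    (hlc : IsLogConcave ν c L)
    (m : Euc d) (hm : gradient (fun z => -Real.log (ν z)) m = 0) :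
    IsLyapunov ν (fun x => (c / d) * ‖x - m‖ ^ 2 + 1) c (3 * c)
        (Metric.closedBall m (Real.sqrt (3 * d / c))) (Real.exp (3 * d * L / (2 * c))) ∧
    IsLyDensity ν m (Real.sqrt (3 * d / c))
        (c⁻¹ + (9 * d / c) * Real.exp (3 * d * L / c))
        ((Vball d)⁻¹ * Real.exp (3 * L * d / (2 * c)) * (4 * Real.pi / (3 * d)) ^ ((d : ℝ) / 2)) := by
  have hL : 0 ≤ L := (norm_nonneg _).trans (hlc.2.2 m)
  have hdecay := hlc.le_exp_neg_mul hm hνpos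
  have hgrowth := hlc.le_exp_mul hm hνpos
  have hmax : ∀ y, ν y ≤ ν m := fun y =>
    (hdecay y).trans (mul_le_of_le_one_left (hνpos m).le (Real.exp_le_one_iff.2 (by nlinarith)))
  have hharnack : ∀ x, ∀ y ∈ Metric.closedBall m (Real.sqrt (3 * d / c)),
      ν x ≤ Real.exp (3 * d * L / (2 * c)) * ν y := fun x y hy => by
    convert le_exp_mul_of_mem_closedBall hL hmax hgrowth (fun y => (hνpos y).le) x hy using 3
    rw [Real.sq_sqrt (by positivity)]
    ring
  have hlyap : IsLyapunov ν (fun x => (c / d) * ‖x - m‖ ^ 2 + 1) c (3 * c)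
      (Metric.closedBall m (Real.sqrt (3 * d / c))) (Real.exp (3 * d * L / (2 * c))) :=
    { contDiff :=
        (contDiff_const.mul ((contDiff_id.sub contDiff_const).norm_sq ℝ)).add contDiff_const
      one_le := fun x => le_add_of_nonneg_left (by positivity)
      lam_pos := hc
      h_pos := by positivity
      C_pos := Real.exp_pos _
      bounded := Metric.isBounded_closedBall
      drift := LGen_le_of_le_inner_gradient hd hc (hlc.le_inner_gradient hm)
      ratio := fun x _ => hharnack x }
  refine ⟨hlyap, _, _, _, _, hlyap, le_of_eq ?_, fun x hx => ?_⟩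
  · rw [Real.sq_sqrt (by positivity), sq, ← Real.exp_add]
    field_simp
    ring_nf
  · refine uball_le_mul hd hc hν.2 hdecay hx ?_
    rw [mul_right_comm 3 L]
    exact hharnack m x hx

/-- a `(c,L)`-log-concave density admits the quadratic Lyapunov function
`V(x) = (c/d)‖x−m‖² + 1`, and is consequently an `Ly(r,q,a)`-density with explicit
constants. -/
theorem logconcave_lyapunov
    (d : ℕ) (hd : 1 ≤ d) (c L : ℝ) (hc : 0 < c) (hL : 0 < L)
    (ν : Euc d → ℝ) (hν : IsDensity ν) (hνpos : ∀ x, 0 < ν x)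
    (hlc : IsLogConcave ν c L)
    (m : Euc d) (hm : gradient (fun z => -Real.log (ν z)) m = 0) :
    IsLyapunov ν (fun x => (c / d) * ‖x - m‖ ^ 2 + 1) c (3 * c)
        (Metric.closedBall m (Real.sqrt (3 * d / c))) (Real.exp (3 * d * L / (2 * c))) ∧
    IsLyDensity ν m (Real.sqrt (3 * d / c))
        (c⁻¹ + (9 * d / c) * Real.exp (3 * d * L / c))
        ((Vball d)⁻¹ * Real.exp (3 * L * d / (2 * c)) * (4 * Real.pi / (3 * d)) ^ ((d : ℝ) / 2)) :=
  logconcave_lyapunov_general d hd c L hc ν hν hνpos hlc m hm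
end
end

section
/- Lyapunov functions from Morse-type estimates: let Ω ⊂ ℝ^d, let H : Ω → ℝ, and suppose V : ℝ^d → ℝ defined by V(x) = exp(H(x)/2) for x ∈ Ω and V(x) = 0 for x ∉ Ω is twice continuously differentiable. Let B ⊂ Ω be a bounded region, let λ₀ > 0, and suppose (1/2)ΔH(x) − (1/4)‖∇H(x)‖² ≤ −λ₀ for all x ∈ Ω∖B. Let ν be the density proportional to exp(−H(x)) on Ω and equal to 0 off Ω, and set h = sup_{x∈B} (−(1/4)‖∇H(x)‖² + (1/2)ΔH(x) + λ₀)·V(x). Then for every x ∈ Ω, L_ν V(x) = (−(1/4)‖∇H(x)‖² + (1/2)ΔH(x))·V(x) ≤ −λ₀ V(x) + h·1_B(x); that is, V is a (λ₀, h, B, C)-Lyapunov function for ν with C = sup_{x∈B} ν(x) / inf_{x∈B} ν(x). -/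
open MeasureTheory RealInnerProductSpace

noncomputable section

/-! On `Ω` we have `V = exp (H / 2)` and `log ν = log Z⁻¹ - H` near every point, so the chain
rule gives `∇V = (V / 2) ∇H` and `ΔV = ((1/4)‖∇H‖² + (1/2)ΔH) V`, hence
`L_ν V = ⟨∇V, -∇H⟩ + ΔV = (-(1/4)‖∇H‖² + (1/2)ΔH) V`. Off `B` the drift hypothesis bounds this by
`-λ₀ V`. On `B` the supremum `h` is finite, since `(-(1/4)‖∇H‖² + (1/2)ΔH + λ₀) V ≤ ΔV + λ₀ V`
and `ΔV + λ₀ V` is continuous on the compact closure of `B`. -/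

open Filter Topology

section Gradient

variable {F : Type*} [NormedAddCommGroup F] [InnerProductSpace ℝ F] [CompleteSpace F]

theorem gradient_comp {g : ℝ → ℝ} {f : F → ℝ} {x : F} (hg : DifferentiableAt ℝ g (f x))
    (hf : DifferentiableAt ℝ f x) : gradient (g ∘ f) x = deriv g (f x) • gradient f x := by
  rw [gradient, (hg.hasDerivAt.comp_hasFDerivAt x hf.hasFDerivAt).fderiv, map_smul, gradient]

end Gradient

theorem hasDerivAt_exp_half (t : ℝ) :
    HasDerivAt (fun s => Real.exp (s / 2)) (Real.exp (t / 2) / 2) t := by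
  simpa [div_eq_mul_inv] using ((hasDerivAt_id t).div_const 2).exp

theorem deriv_exp_half : deriv (fun s => Real.exp (s / 2)) = fun t => Real.exp (t / 2) / 2 :=
  funext fun t => (hasDerivAt_exp_half t).deriv

section Laplacian

variable {d : ℕ}

theorem norm_gradient_sq_eq_sum (f : Euc d → ℝ) (x : Euc d) :
    ‖gradient f x‖ ^ 2 = ∑ i : Fin d, fderiv ℝ f x (EuclideanSpace.single i 1) ^ 2 := by
  rw [EuclideanSpace.norm_sq_eq]
  refine Finset.sum_congr rfl fun i _ => ?_
  rw [Real.norm_eq_abs, sq_abs, gradient, ← InnerProductSpace.toDual_symm_apply,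
    EuclideanSpace.inner_single_right]
  simp

theorem lap_congr_of_eventuallyEq {f g : Euc d → ℝ} {x : Euc d} (h : f =ᶠ[𝓝 x] g) :
    lap f x = lap g x := by
  refine Finset.sum_congr rfl fun i _ => ?_
  have hi : (fun y => fderiv ℝ f y (EuclideanSpace.single i 1)) =ᶠ[𝓝 x]
      fun y => fderiv ℝ g y (EuclideanSpace.single i 1) :=
    (h.fderiv (𝕜 := ℝ)).mono fun y hy => by simp only [hy]
  rw [hi.fderiv_eq]

theorem continuous_lap {f : Euc d → ℝ} (hf : ContDiff ℝ 2 f) : Continuous (lap f) := by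
  refine continuous_finsetSum _ fun i _ => ?_
  have h1 : ContDiff ℝ 1 (fun y => fderiv ℝ f y (EuclideanSpace.single i 1)) :=
    (hf.fderiv_right (m := 1) (by norm_num)).clm_apply contDiff_const
  exact (h1.continuous_fderiv one_ne_zero).clm_apply continuous_const

theorem lap_comp {g : ℝ → ℝ} (hg : ContDiff ℝ 2 g) {f : Euc d → ℝ} {x : Euc d}
    (hf : ContDiffAt ℝ 2 f x) :
    lap (g ∘ f) x = deriv (deriv g) (f x) * ‖gradient f x‖ ^ 2 + deriv g (f x) * lap f x := by
  have hg_diff : Differentiable ℝ g := hg.differentiable (by norm_num)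
  have hg'_diff : Differentiable ℝ (deriv g) :=
    (contDiff_succ_iff_deriv.mp hg).2.2.differentiable one_ne_zero
  have hf_near : ∀ᶠ y in 𝓝 x, DifferentiableAt ℝ f y :=
    (hf.eventually (by simp)).mono fun y hy => hy.differentiableAt (by norm_num)
  have hDf : DifferentiableAt ℝ (fderiv ℝ f) x :=
    (hf.fderiv_right (m := 1) (by norm_num)).differentiableAt one_ne_zero
  have second_deriv : ∀ e, fderiv ℝ (fun y => fderiv ℝ (g ∘ f) y e) x e =
      deriv (deriv g) (f x) * fderiv ℝ f x e ^ 2 +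
        deriv g (f x) * fderiv ℝ (fun y => fderiv ℝ f y e) x e := by
    intro e
    have hloc : (fun y => fderiv ℝ (g ∘ f) y e) =ᶠ[𝓝 x]
        fun y => deriv g (f y) * fderiv ℝ f y e := hf_near.mono fun y hy => by
      simp only [((hg_diff _).hasDerivAt.comp_hasFDerivAt y hy.hasFDerivAt).fderiv]; rfl
    have hg'f : HasFDerivAt (fun y => deriv g (f y)) (deriv (deriv g) (f x) • fderiv ℝ f x) x :=
      (hg'_diff _).hasDerivAt.comp_hasFDerivAt x hf_near.self_of_nhds.hasFDerivAt
    have hDfe : DifferentiableAt ℝ (fun y => fderiv ℝ f y e) x :=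
      hDf.clm_apply (differentiableAt_const e)
    rw [hloc.fderiv_eq, (hg'f.fun_mul hDfe.hasFDerivAt).fderiv]
    simp only [add_apply, smul_apply, smul_eq_mul]
    ring
  simp only [lap, second_deriv, Finset.sum_add_distrib, ← Finset.mul_sum, norm_gradient_sq_eq_sum]

theorem lap_exp_half {f : Euc d → ℝ} {x : Euc d} (hf : ContDiffAt ℝ 2 f x) :
    lap (fun y => Real.exp (f y / 2)) x =
      ((1 / 4) * ‖gradient f x‖ ^ 2 + (1 / 2) * lap f x) * Real.exp (f x / 2) := by
  have hexp : ContDiff ℝ 2 fun s => Real.exp (s / 2) := by fun_prop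
  have h2 : deriv (deriv fun s => Real.exp (s / 2)) (f x) = Real.exp (f x / 2) / 4 := by
    rw [deriv_exp_half, ((hasDerivAt_exp_half (f x)).div_const 2).deriv]; ring
  rw [show (fun y => Real.exp (f y / 2)) = (fun s => Real.exp (s / 2)) ∘ f from rfl,
    lap_comp hexp hf, h2, deriv_exp_half]
  ring

theorem LGen_congr_of_eventuallyEq {ν ν' V V' : Euc d → ℝ} {x : Euc d}
    (hν : ν =ᶠ[𝓝 x] ν') (hV : V =ᶠ[𝓝 x] V') : LGen ν V x = LGen ν' V' x := by
  have hlog : (fun y => Real.log (ν y)) =ᶠ[𝓝 x] fun y => Real.log (ν' y) :=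
    hν.mono fun y hy => congrArg Real.log hy
  rw [LGen, LGen, hV.gradient_eq, hlog.gradient_eq, lap_congr_of_eventuallyEq hV]

theorem LGen_gibbs_exp_half {H : Euc d → ℝ} {x : Euc d} (hH : ContDiffAt ℝ 2 H x)
    {c : ℝ} (hc : c ≠ 0) :
    LGen (fun y => c * Real.exp (-H y)) (fun y => Real.exp (H y / 2)) x =
      (-(1 / 4) * ‖gradient H x‖ ^ 2 + (1 / 2) * lap H x) * Real.exp (H x / 2) := by
  have hHx : DifferentiableAt ℝ H x := hH.differentiableAt (by norm_num)
  have hlog : (fun y => Real.log (c * Real.exp (-H y))) = (fun s => Real.log c - s) ∘ H := by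
    ext y
    rw [Function.comp_apply, Real.log_mul hc (Real.exp_pos _).ne', Real.log_exp, sub_eq_add_neg]
  rw [LGen, lap_exp_half hH, hlog,
    show (fun y => Real.exp (H y / 2)) = (fun s => Real.exp (s / 2)) ∘ H from rfl,
    gradient_comp (by fun_prop) hHx, gradient_comp (by fun_prop) hHx, deriv_exp_half,
    deriv_const_sub, deriv_id'', real_inner_smul_left, real_inner_smul_right,
    real_inner_self_eq_norm_sq]
  ring

end Laplacian

theorem le_neg_mul_add_sSup_mul_indicator {α : Type*} {Ω B : Set α} {L G V : α → ℝ} {lam : ℝ}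
    (hL : ∀ x ∈ Ω, L x = G x * V x) (hV : ∀ x, 0 ≤ V x) (hdrift : ∀ x ∈ Ω \ B, G x ≤ -lam)
    (hbdd : BddAbove ((fun x => (G x + lam) * V x) '' B)) {x : α} (hx : x ∈ Ω) :
    L x ≤ -lam * V x + sSup ((fun x => (G x + lam) * V x) '' B) * B.indicator 1 x := by
  by_cases hxB : x ∈ B
  · have hsup := le_csSup hbdd (Set.mem_image_of_mem _ hxB)
    rw [Set.indicator_of_mem hxB, Pi.one_apply, mul_one, hL x hx]
    linarith
  · rw [Set.indicator_of_notMem hxB, mul_zero, add_zero, hL x hx]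
    exact mul_le_mul_of_nonneg_right (hdrift x ⟨hx, hxB⟩) (hV x)

theorem morse_lyapunov_general
    (d : ℕ) (Ω : Set (Euc d)) (hΩ : IsOpen Ω)
    (H : Euc d → ℝ) (hH : ContDiffOn ℝ 2 H Ω)
    (V : Euc d → ℝ) (hVdef : ∀ x, V x = Ω.indicator (fun y => Real.exp (H y / 2)) x)
    (hV : ContDiff ℝ 2 V)
    (B : Set (Euc d)) (hBΩ : B ⊆ Ω) (hBb : Bornology.IsBounded B)
    (lam0 : ℝ)
    (hdrift : ∀ x ∈ Ω \ B, (1 / 2) * lap H x - (1 / 4) * ‖gradient H x‖ ^ 2 ≤ -lam0)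
    (ν : Euc d → ℝ) (Z : ℝ) (hZ : 0 < Z)
    (hνdef : ∀ x, ν x = Ω.indicator (fun y => Z⁻¹ * Real.exp (-H y)) x)
    (h : ℝ)
    (hh : h = sSup
      ((fun x => (-(1 / 4) * ‖gradient H x‖ ^ 2 + (1 / 2) * lap H x + lam0) * V x) '' B)) :
    ∀ x ∈ Ω,
      LGen ν V x = (-(1 / 4) * ‖gradient H x‖ ^ 2 + (1 / 2) * lap H x) * V x ∧
      LGen ν V x ≤ -lam0 * V x + h * B.indicator 1 x := by
  have hV_nonneg : ∀ x, 0 ≤ V x := fun x => by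
    rw [hVdef]; exact Set.indicator_nonneg (fun y _ => (Real.exp_pos _).le) x
  have hV_near : ∀ x ∈ Ω, V =ᶠ[𝓝 x] fun y => Real.exp (H y / 2) := fun x hx => by
    filter_upwards [hΩ.mem_nhds hx] with y hy using by rw [hVdef, Set.indicator_of_mem hy]
  have hν_near : ∀ x ∈ Ω, ν =ᶠ[𝓝 x] fun y => Z⁻¹ * Real.exp (-H y) := fun x hx => by
    filter_upwards [hΩ.mem_nhds hx] with y hy using by rw [hνdef, Set.indicator_of_mem hy]
  have hLGen : ∀ x ∈ Ω,
      LGen ν V x = (-(1 / 4) * ‖gradient H x‖ ^ 2 + (1 / 2) * lap H x) * V x := fun x hx => by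
    rw [LGen_congr_of_eventuallyEq (hν_near x hx) (hV_near x hx),
      LGen_gibbs_exp_half (hH.contDiffAt (hΩ.mem_nhds hx)) (inv_ne_zero hZ.ne'),
      (hV_near x hx).self_of_nhds]
  have hbdd : BddAbove
      ((fun x => (-(1 / 4) * ‖gradient H x‖ ^ 2 + (1 / 2) * lap H x + lam0) * V x) '' B) := by
    have hcont : Continuous fun x => lap V x + lam0 * V x :=
      (continuous_lap hV).add (continuous_const.mul hV.continuous)
    obtain ⟨M, hM⟩ := hBb.isCompact_closure.bddAbove_image hcont.continuousOn
    refine ⟨M, ?_⟩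
    rintro _ ⟨x, hxB, rfl⟩
    have hlapV : lap V x = ((1 / 4) * ‖gradient H x‖ ^ 2 + (1 / 2) * lap H x) * V x := by
      rw [lap_congr_of_eventuallyEq (hV_near x (hBΩ hxB)),
        lap_exp_half (hH.contDiffAt (hΩ.mem_nhds (hBΩ hxB))), (hV_near x (hBΩ hxB)).self_of_nhds]
    have hM_x := hM (Set.mem_image_of_mem _ (subset_closure hxB))
    nlinarith [mul_nonneg (sq_nonneg ‖gradient H x‖) (hV_nonneg x)]
  intro x hx
  exact ⟨hLGen x hx, hh ▸ le_neg_mul_add_sSup_mul_indicator hLGen hV_nonneg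
    (fun y hy => by linarith [hdrift y hy]) hbdd hx⟩

/-- Lyapunov functions from Morse-type estimates: for
`V = exp(H/2)` on `Ω` (extended by `0`) and `ν ∝ exp(−H)` on `Ω`, the drift estimate
`(1/2)ΔH − (1/4)‖∇H‖² ≤ −λ₀` off `B` yields
`L_ν V = (−(1/4)‖∇H‖² + (1/2)ΔH)·V ≤ −λ₀ V + h·1_B` on `Ω`, where `h` is the
supremum of `(−(1/4)‖∇H‖² + (1/2)ΔH + λ₀)·V` over `B`. -/
theorem morse_lyapunov
    (d : ℕ) (hd : 1 ≤ d) (Ω : Set (Euc d)) (hΩ : IsOpen Ω)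
    (H : Euc d → ℝ) (hH : ContDiffOn ℝ 2 H Ω)
    (V : Euc d → ℝ) (hVdef : ∀ x, V x = Ω.indicator (fun y => Real.exp (H y / 2)) x)
    (hV : ContDiff ℝ 2 V)
    (B : Set (Euc d)) (hBΩ : B ⊆ Ω) (hBb : Bornology.IsBounded B)
    (lam0 : ℝ) (hlam0 : 0 < lam0)
    (hdrift : ∀ x ∈ Ω \ B, (1 / 2) * lap H x - (1 / 4) * ‖gradient H x‖ ^ 2 ≤ -lam0)
    (ν : Euc d → ℝ) (hν : IsDensity ν) (Z : ℝ) (hZ : 0 < Z)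
    (hνdef : ∀ x, ν x = Ω.indicator (fun y => Z⁻¹ * Real.exp (-H y)) x)
    (h : ℝ)
    (hh : h = sSup
      ((fun x => (-(1 / 4) * ‖gradient H x‖ ^ 2 + (1 / 2) * lap H x + lam0) * V x) '' B)) :
    ∀ x ∈ Ω,
      LGen ν V x = (-(1 / 4) * ‖gradient H x‖ ^ 2 + (1 / 2) * lap H x) * V x ∧
      LGen ν V x ≤ -lam0 * V x + h * B.indicator 1 x :=
  morse_lyapunov_general d Ω hΩ H hH V hVdef hV B hBΩ hBb lam0 hdrift ν Z hZ hνdef h hh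

end
end

section
/- Double-well drift estimate: let a > 0, ε > 0, and let H : ℝ → ℝ be given by H(x) = (1/2)(x² − a²)², so that H'(x) = 2x(x² − a²) and H''(x) = 6x² − 2a². Then for every x ∈ ℝ with x > 0 and (x − a)² ≥ 3ε/a², one has (1/(2ε))·H''(x) − (1/(4ε²))·(H'(x))² ≤ −a²/ε; and symmetrically, for every x < 0 with (x + a)² ≥ 3ε/a², one has (1/(2ε))·H''(x) − (1/(4ε²))·(H'(x))² ≤ −a²/ε. -/
/-! With `H'(x) = 2x(x² − a²)` and `H''(x) = 6x² − 2a²`, clearing denominators turns the drift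
bound into `x² (3ε − (x² − a²)²) ≤ 0`, so it suffices that `(x² − a²)² ≥ 3ε`. For `x > 0` this
follows from `(x² − a²)² = (x − a)² (x + a)²` and `(x + a)² ≥ a²`; the case `x < 0` is its
mirror image, since everything depends on `x` only through `x²` and `(−x − a)² = (x + a)²`. -/

noncomputable section

def doubleWell (a x : ℝ) : ℝ := 1 / 2 * (x ^ 2 - a ^ 2) ^ 2

theorem hasDerivAt_doubleWell (a x : ℝ) :
    HasDerivAt (doubleWell a) (2 * x * (x ^ 2 - a ^ 2)) x := by
  have h := (((hasDerivAt_pow 2 x).sub_const (a ^ 2)).pow 2).const_mul (1 / 2 : ℝ)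
  exact h.congr_deriv (by ring)

theorem deriv_doubleWell (a : ℝ) : deriv (doubleWell a) = fun x => 2 * x * (x ^ 2 - a ^ 2) :=
  funext fun x => (hasDerivAt_doubleWell a x).deriv

theorem deriv_deriv_doubleWell (a x : ℝ) :
    deriv (deriv (doubleWell a)) x = 6 * x ^ 2 - 2 * a ^ 2 := by
  rw [deriv_doubleWell]
  have h := ((hasDerivAt_id' x).const_mul (2 : ℝ)).mul ((hasDerivAt_pow 2 x).sub_const (a ^ 2))
  exact (h.congr_deriv (by ring)).deriv

theorem drift_le_of_three_mul_le_sq {a ε x : ℝ} (hε : ε ≠ 0) (h : 3 * ε ≤ (x ^ 2 - a ^ 2) ^ 2) :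
    (1 / (2 * ε)) * (6 * x ^ 2 - 2 * a ^ 2) -
      (1 / (4 * ε ^ 2)) * (2 * x * (x ^ 2 - a ^ 2)) ^ 2 ≤ -a ^ 2 / ε := by
  have key : -a ^ 2 / ε - ((1 / (2 * ε)) * (6 * x ^ 2 - 2 * a ^ 2) -
      (1 / (4 * ε ^ 2)) * (2 * x * (x ^ 2 - a ^ 2)) ^ 2)
      = x ^ 2 * ((x ^ 2 - a ^ 2) ^ 2 - 3 * ε) / ε ^ 2 := by
    field_simp
    ring
  have : 0 ≤ x ^ 2 * ((x ^ 2 - a ^ 2) ^ 2 - 3 * ε) / ε ^ 2 :=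
    div_nonneg (mul_nonneg (sq_nonneg x) (sub_nonneg.mpr h)) (sq_nonneg ε)
  linarith

theorem le_sq_sq_sub_sq_of_pos {a x δ : ℝ} (ha : 0 < a) (hx : 0 < x)
    (h : δ / a ^ 2 ≤ (x - a) ^ 2) : δ ≤ (x ^ 2 - a ^ 2) ^ 2 := by
  have hδ : δ ≤ (x - a) ^ 2 * a ^ 2 := (div_le_iff₀ (by positivity)).mp h
  have ha_le : a ^ 2 ≤ (x + a) ^ 2 := pow_le_pow_left₀ ha.le (by linarith) 2
  calc δ ≤ (x - a) ^ 2 * a ^ 2 := hδ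
    _ ≤ (x - a) ^ 2 * (x + a) ^ 2 := mul_le_mul_of_nonneg_left ha_le (sq_nonneg _)
    _ = (x ^ 2 - a ^ 2) ^ 2 := by ring

end

/-- double-well drift estimate (from Lemma 3.4 of the paper): for the
double-well potential `H(x) = (1/2)(x² − a²)²`, whose derivatives are
`H'(x) = 2x(x² − a²)` and `H''(x) = 6x² − 2a²`, one has
`(1/(2ε))H''(x) − (1/(4ε²))(H'(x))² ≤ −a²/ε` whenever `x > 0` and
`(x−a)² ≥ 3ε/a²`, and symmetrically for `x < 0` with `(x+a)² ≥ 3ε/a²`. -/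
theorem double_well_drift (a ε : ℝ) (ha : 0 < a) (hε : 0 < ε)
    (H : ℝ → ℝ) (hH : ∀ x, H x = (1 / 2) * (x ^ 2 - a ^ 2) ^ 2) :
    (∀ x : ℝ, deriv H x = 2 * x * (x ^ 2 - a ^ 2) ∧ deriv (deriv H) x = 6 * x ^ 2 - 2 * a ^ 2) ∧
    (∀ x : ℝ, 0 < x → 3 * ε / a ^ 2 ≤ (x - a) ^ 2 →
      (1 / (2 * ε)) * deriv (deriv H) x - (1 / (4 * ε ^ 2)) * (deriv H x) ^ 2 ≤ -a ^ 2 / ε) ∧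
    (∀ x : ℝ, x < 0 → 3 * ε / a ^ 2 ≤ (x + a) ^ 2 →
      (1 / (2 * ε)) * deriv (deriv H) x - (1 / (4 * ε ^ 2)) * (deriv H x) ^ 2 ≤ -a ^ 2 / ε) := by
  obtain rfl : H = doubleWell a := funext hH
  refine ⟨fun x => ⟨congrFun (deriv_doubleWell a) x, deriv_deriv_doubleWell a x⟩,
    fun x hx hsq => ?_, fun x hx hsq => ?_⟩ <;> rw [deriv_deriv_doubleWell, deriv_doubleWell]
  · exact drift_le_of_three_mul_le_sq hε.ne' (le_sq_sq_sub_sq_of_pos ha hx hsq)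
  · have hmirror := le_sq_sq_sub_sq_of_pos ha (neg_pos.mpr hx) (by rwa [← neg_add', neg_sq])
    rw [neg_sq] at hmirror
    exact drift_le_of_three_mul_le_sq hε.ne' hmirror
end

section
/- Mean difference between uniform distributions on concentric balls: let B_r = B(x₀, r) and B_R = B(x₀, R) be concentric balls in ℝ^d with 0 < r ≤ R, and let u_{B_r}, u_{B_R} be the corresponding uniform densities. Then for every continuously differentiable f : ℝ^d → ℝ: if d = 1, (E_{u_{B_r}}[f] − E_{u_{B_R}}[f])² ≤ R²·log(R/r)·∫ ‖∇f(x)‖² u_{B_R}(x) dx, and if d ≥ 2, (E_{u_{B_r}}[f] − E_{u_{B_R}}[f])² ≤ (R^{d+1}/((d−1)·r^{d−1}))·∫ ‖∇f(x)‖² u_{B_R}(x) dx. -/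
open MeasureTheory RealInnerProductSpace

noncomputable section

/-! Scaling by `t = r / R` turns the mean of `f` over `B_r` into the mean of
`x ↦ f (x₀ + t (x - x₀))` over `B_R`, so by the fundamental theorem of calculus along rays from `x₀`
the difference of the two means is `-⨍_{B_R} ∫_t^1 Df(x₀ + s (x - x₀)) (x - x₀) ds dx`.
After exchanging the integrals, Cauchy–Schwarz over `B_R` together with `‖x - x₀‖ ≤ R` bounds the
square of the inner mean at scale `s` by `R² s⁻ᵈ ⨍_{B_R} ‖Df‖²`: the factor `s⁻ᵈ` comes from
rescaling `B_{sR}` back to `B_R`. Cauchy–Schwarz over `s ∈ [t, 1]` then gives the bound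
`R² (∫_t^1 s⁻ᵈ ds) ⨍_{B_R} ‖Df‖²`, and `∫_t^1 s⁻ᵈ ds` is `log (R / r)` for `d = 1` and at most
`(R / r)ᵈ⁻¹ / (d - 1)` for `d ≥ 2`. -/

section

open Metric Module

theorem sq_setIntegral_le_measureReal_mul {α : Type*} [MeasurableSpace α] {μ : Measure α}
    {s : Set α} {h : α → ℝ} (hs : μ s ≠ ⊤) (hh : IntegrableOn h s μ)
    (hh2 : IntegrableOn (fun x => h x ^ 2) s μ) :
    (∫ x in s, h x ∂μ) ^ 2 ≤ μ.real s * ∫ x in s, h x ^ 2 ∂μ := by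
  rcases eq_or_ne (μ s) 0 with hs0 | hs0
  · simp [setIntegral_measure_zero _ hs0]
  have hV : 0 < μ.real s := ENNReal.toReal_pos hs0 hs
  have jensen : (⨍ x in s, h x ∂μ) ^ 2 ≤ ⨍ x in s, h x ^ 2 ∂μ :=
    (even_two.convexOn_pow).map_set_average_le (continuous_pow 2).continuousOn isClosed_univ
      hs0 hs (by simp) hh hh2
  rw [setAverage_eq, setAverage_eq, smul_eq_mul, smul_eq_mul] at jensen
  calc (∫ x in s, h x ∂μ) ^ 2 = μ.real s ^ 2 * ((μ.real s)⁻¹ * ∫ x in s, h x ∂μ) ^ 2 := by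
        field_simp
    _ ≤ μ.real s ^ 2 * ((μ.real s)⁻¹ * ∫ x in s, h x ^ 2 ∂μ) := by gcongr
    _ = μ.real s * ∫ x in s, h x ^ 2 ∂μ := by field_simp

theorem sq_intervalIntegral_le {h : ℝ → ℝ} (hh : Continuous h) {a b : ℝ} (hab : a ≤ b) :
    (∫ s in a..b, h s) ^ 2 ≤ (b - a) * ∫ s in a..b, h s ^ 2 := by
  simp only [intervalIntegral.integral_of_le hab]
  rw [← Real.volume_real_Ioc_of_le hab]
  exact sq_setIntegral_le_measureReal_mul measure_Ioc_lt_top.ne hh.integrableOn_Ioc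
    (hh.pow 2).integrableOn_Ioc

theorem intervalIntegral_inv_pow_le {n : ℕ} (hn : 2 ≤ n) {t : ℝ} (ht : 0 < t) :
    ∫ s in t..1, (s ^ n)⁻¹ ≤ (t ^ (n - 1))⁻¹ / ((n : ℝ) - 1) := by
  obtain ⟨m, rfl⟩ : ∃ m, n = m + 1 := ⟨n - 1, by omega⟩
  have hm : (0 : ℝ) < m := by exact_mod_cast (by omega : 0 < m)
  have h0 : (0 : ℝ) ∉ Set.uIcc t 1 := fun h => by
    rcases Set.mem_uIcc.1 h with h | h <;> linarith [h.1]
  have hint := integral_zpow (a := t) (b := 1) (n := -((m + 1 : ℕ) : ℤ))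
    (Or.inr ⟨by omega, h0⟩)
  simp only [zpow_neg, zpow_natCast] at hint
  have hexp : -((m + 1 : ℕ) : ℤ) + 1 = -(m : ℤ) := by omega
  rw [hint, hexp, one_zpow, zpow_neg, zpow_natCast, Nat.add_sub_cancel]
  push_cast
  rw [show -((m : ℝ) + 1) + 1 = -m by ring, add_sub_cancel_right, div_neg, ← neg_div, neg_sub,
    div_le_div_iff_of_pos_right hm]
  linarith

section Line

variable {E F : Type*} [NormedAddCommGroup E] [NormedSpace ℝ E] [NormedAddCommGroup F]
  [NormedSpace ℝ F] [CompleteSpace F]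

theorem intervalIntegral_fderiv_apply_line {f : E → F} (hf : ContDiff ℝ 1 f) (x v : E) (a b : ℝ) :
    ∫ s in a..b, fderiv ℝ f (x + s • v) v = f (x + b • v) - f (x + a • v) := by
  refine intervalIntegral.integral_eq_sub_of_hasDerivAt (f := fun s => f (x + s • v))
    (fun s _ => ?_) ?_
  · have hline : HasDerivAt (fun s : ℝ => x + s • v) v s := by
      simpa using ((hasDerivAt_id s).smul_const v).const_add x
    exact ((hf.differentiable one_ne_zero) _).hasFDerivAt.comp_hasDerivAt s hline
  · have hcont : Continuous fun s : ℝ => fderiv ℝ f (x + s • v) v :=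
      ((hf.continuous_fderiv one_ne_zero).comp (by fun_prop)).clm_apply continuous_const
    exact hcont.intervalIntegrable a b

end Line

section HaarMeasure

variable {E F : Type*} [NormedAddCommGroup E] [NormedSpace ℝ E]

theorem mem_closedBall_homothety_iff (x₀ x : E) {t : ℝ} (ht : 0 < t) (R : ℝ) :
    x₀ + t • (x - x₀) ∈ closedBall x₀ (t * R) ↔ x ∈ closedBall x₀ R := by
  simp [mem_closedBall, dist_eq_norm, norm_smul, abs_of_pos ht, mul_le_mul_iff_right₀ ht]

variable [FiniteDimensional ℝ E] [MeasurableSpace E] [BorelSpace E] (μ : Measure E)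
  [μ.IsAddHaarMeasure] [NormedAddCommGroup F] [NormedSpace ℝ F]

theorem integral_comp_homothety (x₀ : E) {t : ℝ} (ht : 0 ≤ t) (g : E → F) :
    ∫ x, g (x₀ + t • (x - x₀)) ∂μ = (t ^ finrank ℝ E)⁻¹ • ∫ x, g x ∂μ := by
  calc ∫ x, g (x₀ + t • (x - x₀)) ∂μ = ∫ x, g (x₀ + t • x) ∂μ := by
        simpa using (integral_add_right_eq_self (μ := μ) (fun x => g (x₀ + t • (x - x₀))) x₀).symm
    _ = (t ^ finrank ℝ E)⁻¹ • ∫ x, g (x₀ + x) ∂μ :=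
        Measure.integral_comp_smul_of_nonneg μ (fun y => g (x₀ + y)) t (hR := ht)
    _ = (t ^ finrank ℝ E)⁻¹ • ∫ x, g x ∂μ := by rw [integral_add_left_eq_self]

theorem setIntegral_closedBall_comp_homothety (x₀ : E) {t : ℝ} (ht : 0 < t) (R : ℝ) (g : E → F) :
    ∫ x in closedBall x₀ R, g (x₀ + t • (x - x₀)) ∂μ
      = (t ^ finrank ℝ E)⁻¹ • ∫ x in closedBall x₀ (t * R), g x ∂μ := by
  rw [← integral_indicator measurableSet_closedBall, ← integral_indicator measurableSet_closedBall,
    ← integral_comp_homothety μ x₀ ht.le]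
  congr 1 with x
  by_cases hx : x ∈ closedBall x₀ R
  · simp [hx, (mem_closedBall_homothety_iff x₀ x ht R).2 hx]
  · simp [hx, mt (mem_closedBall_homothety_iff x₀ x ht R).1 hx]

theorem setAverage_closedBall_comp_homothety (x₀ : E) {t : ℝ} (ht : 0 < t) (R : ℝ) (g : E → F) :
    ⨍ x in closedBall x₀ (t * R), g x ∂μ = ⨍ x in closedBall x₀ R, g (x₀ + t • (x - x₀)) ∂μ := by
  have hvol : μ.real (closedBall x₀ (t * R)) = t ^ finrank ℝ E * μ.real (closedBall x₀ R) := by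
    simp only [measureReal_def, Measure.addHaar_closedBall_mul_of_pos μ x₀ ht,
      Measure.addHaar_closedBall_center, ENNReal.toReal_mul]
    rw [ENNReal.toReal_ofReal (by positivity)]
  rw [setAverage_eq, setAverage_eq, setIntegral_closedBall_comp_homothety μ x₀ ht, hvol, smul_smul,
    mul_inv, mul_comm]

variable [CompleteSpace F]

theorem setIntegral_sub_comp_homothety {f : E → F} (hf : ContDiff ℝ 1 f) (x₀ : E) (R t : ℝ) :
    ∫ x in closedBall x₀ R, (f (x₀ + t • (x - x₀)) - f x) ∂μ
      = -∫ s in t..1, ∫ x in closedBall x₀ R, fderiv ℝ f (x₀ + s • (x - x₀)) (x - x₀) ∂μ := by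
  have hg : Continuous fun p : ℝ × E => fderiv ℝ f (x₀ + p.1 • (p.2 - x₀)) (p.2 - x₀) :=
    ((hf.continuous_fderiv one_ne_zero).comp (by fun_prop)).clm_apply (by fun_prop)
  have hint : IntegrableOn (fun p : ℝ × E => fderiv ℝ f (x₀ + p.1 • (p.2 - x₀)) (p.2 - x₀))
      (Set.uIoc t 1 ×ˢ closedBall x₀ R) (volume.prod μ) :=
    (hg.continuousOn.integrableOn_compact (μ := volume.prod μ)
      (isCompact_uIcc.prod (isCompact_closedBall x₀ R))).mono_set
        (Set.prod_mono Set.uIoc_subset_uIcc le_rfl)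
  rw [intervalIntegral_integral_swap (by rwa [Measure.prod_restrict]), ← integral_neg]
  refine setIntegral_congr_fun measurableSet_closedBall fun x _ => ?_
  rw [intervalIntegral_fderiv_apply_line hf x₀ (x - x₀) t 1, one_smul, add_sub_cancel, neg_sub]

theorem sq_setIntegral_fderiv_homothety_le {f : E → ℝ} (hf : ContDiff ℝ 1 f) (x₀ : E) {R s : ℝ}
    (hR : 0 ≤ R) (hs : 0 < s) (hs1 : s ≤ 1) :
    (∫ x in closedBall x₀ R, fderiv ℝ f (x₀ + s • (x - x₀)) (x - x₀) ∂μ) ^ 2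
      ≤ μ.real (closedBall x₀ R) * R ^ 2 * (s ^ finrank ℝ E)⁻¹ *
          ∫ x in closedBall x₀ R, ‖fderiv ℝ f x‖ ^ 2 ∂μ := by
  set B := closedBall x₀ R
  have hB : IsCompact B := isCompact_closedBall x₀ R
  have hf' : Continuous (fderiv ℝ f) := hf.continuous_fderiv one_ne_zero
  have hg : Continuous fun x => fderiv ℝ f (x₀ + s • (x - x₀)) (x - x₀) :=
    (hf'.comp (by fun_prop)).clm_apply (by fun_prop)
  have hgrad : Continuous fun x => ‖fderiv ℝ f x‖ ^ 2 := hf'.norm.pow 2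
  have hpoint : ∀ x ∈ B, (fderiv ℝ f (x₀ + s • (x - x₀)) (x - x₀)) ^ 2
      ≤ R ^ 2 * ‖fderiv ℝ f (x₀ + s • (x - x₀))‖ ^ 2 := by
    intro x hx
    have hxR : ‖x - x₀‖ ≤ R := by rwa [← dist_eq_norm]
    rw [← sq_abs, ← Real.norm_eq_abs, ← mul_pow, mul_comm]
    gcongr
    exact ((fderiv ℝ f _).le_opNorm _).trans (by gcongr)
  have hsub : closedBall x₀ (s * R) ⊆ B := closedBall_subset_closedBall (mul_le_of_le_one_left hR hs1)
  calc (∫ x in B, fderiv ℝ f (x₀ + s • (x - x₀)) (x - x₀) ∂μ) ^ 2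
      ≤ μ.real B * ∫ x in B, (fderiv ℝ f (x₀ + s • (x - x₀)) (x - x₀)) ^ 2 ∂μ :=
        sq_setIntegral_le_measureReal_mul measure_closedBall_lt_top.ne
          (hg.continuousOn.integrableOn_compact hB)
          ((hg.pow 2).continuousOn.integrableOn_compact hB)
    _ ≤ μ.real B * ∫ x in B, R ^ 2 * ‖fderiv ℝ f (x₀ + s • (x - x₀))‖ ^ 2 ∂μ := by
        refine mul_le_mul_of_nonneg_left ?_ measureReal_nonneg
        have hgrad_s : Continuous fun x => R ^ 2 * ‖fderiv ℝ f (x₀ + s • (x - x₀))‖ ^ 2 :=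
          continuous_const.mul (hgrad.comp (by fun_prop))
        exact setIntegral_mono_on ((hg.pow 2).continuousOn.integrableOn_compact hB)
          (hgrad_s.continuousOn.integrableOn_compact hB) measurableSet_closedBall hpoint
    _ = μ.real B * R ^ 2 *
          ((s ^ finrank ℝ E)⁻¹ * ∫ x in closedBall x₀ (s * R), ‖fderiv ℝ f x‖ ^ 2 ∂μ) := by
        rw [integral_const_mul,
          setIntegral_closedBall_comp_homothety μ x₀ hs R (fun x => ‖fderiv ℝ f x‖ ^ 2),
          smul_eq_mul, mul_assoc]
    _ ≤ μ.real B * R ^ 2 * ((s ^ finrank ℝ E)⁻¹ * ∫ x in B, ‖fderiv ℝ f x‖ ^ 2 ∂μ) := by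
        gcongr ?_ * (_ * ?_)
        exact setIntegral_mono_set (hgrad.continuousOn.integrableOn_compact hB)
          (Filter.Eventually.of_forall fun x => by positivity) hsub.eventuallyLE
    _ = _ := by ring

theorem sq_setAverage_closedBall_sub_le {f : E → ℝ} (hf : ContDiff ℝ 1 f) (x₀ : E) {r R : ℝ}
    (hr : 0 < r) (hrR : r ≤ R) :
    (⨍ x in closedBall x₀ r, f x ∂μ - ⨍ x in closedBall x₀ R, f x ∂μ) ^ 2
      ≤ R ^ 2 * (∫ s in r / R..1, (s ^ finrank ℝ E)⁻¹) *
          ⨍ x in closedBall x₀ R, ‖fderiv ℝ f x‖ ^ 2 ∂μ := by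
  have hR : 0 < R := hr.trans_le hrR
  set t := r / R
  have ht : 0 < t := div_pos hr hR
  have ht1 : t ≤ 1 := (div_le_one hR).2 hrR
  set B := closedBall x₀ R
  have hB : IsCompact B := isCompact_closedBall x₀ R
  set V := μ.real B
  have hV : 0 < V :=
    ENNReal.toReal_pos (measure_closedBall_pos μ x₀ hR).ne' measure_closedBall_lt_top.ne
  set I := ∫ x in B, ‖fderiv ℝ f x‖ ^ 2 ∂μ
  set J := ∫ s in t..1, (s ^ finrank ℝ E)⁻¹
  set H : ℝ → ℝ := fun s => ∫ x in B, fderiv ℝ f (x₀ + s • (x - x₀)) (x - x₀) ∂μ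
  have hdiff :
      ⨍ x in closedBall x₀ r, f x ∂μ - ⨍ x in B, f x ∂μ = -(V⁻¹ * ∫ s in t..1, H s) := by
    have hft : Continuous fun x => f (x₀ + t • (x - x₀)) := hf.continuous.comp (by fun_prop)
    rw [show r = t * R from (div_mul_cancel₀ r hR.ne').symm,
      setAverage_closedBall_comp_homothety μ x₀ ht, setAverage_eq, setAverage_eq, smul_eq_mul,
      smul_eq_mul, ← mul_sub, ← integral_sub (hft.continuousOn.integrableOn_compact hB)
        (hf.continuous.continuousOn.integrableOn_compact hB),
      setIntegral_sub_comp_homothety μ hf, mul_neg]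
  have hH : Continuous H := continuous_parametric_integral_of_continuous
    (f := fun s x => fderiv ℝ f (x₀ + s • (x - x₀)) (x - x₀))
    (((hf.continuous_fderiv one_ne_zero).comp (by fun_prop)).clm_apply (by fun_prop)) hB
  have hslice : ∀ s ∈ Set.Icc t 1, H s ^ 2 ≤ V * R ^ 2 * I * (s ^ finrank ℝ E)⁻¹ := by
    intro s hs
    have := sq_setIntegral_fderiv_homothety_le μ hf x₀ hR.le (ht.trans_le hs.1) hs.2
    linarith
  have hweight : ContinuousOn (fun s : ℝ => (s ^ finrank ℝ E)⁻¹) (Set.uIcc t 1) :=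
    (continuousOn_pow _).inv₀ fun s hs =>
      pow_ne_zero _ (ht.trans_le (Set.uIcc_of_le ht1 ▸ hs).1).ne'
  have hmain : (∫ s in t..1, H s) ^ 2 ≤ V * R ^ 2 * I * J :=
    calc (∫ s in t..1, H s) ^ 2 ≤ (1 - t) * ∫ s in t..1, H s ^ 2 := sq_intervalIntegral_le hH ht1
      _ ≤ ∫ s in t..1, H s ^ 2 :=
        mul_le_of_le_one_left (intervalIntegral.integral_nonneg ht1 fun s _ => sq_nonneg _)
          (by linarith)
      _ ≤ ∫ s in t..1, V * R ^ 2 * I * (s ^ finrank ℝ E)⁻¹ :=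
        intervalIntegral.integral_mono_on ht1 ((hH.pow 2).intervalIntegrable t 1)
          (hweight.intervalIntegrable.const_mul _) hslice
      _ = V * R ^ 2 * I * J := intervalIntegral.integral_const_mul _ _
  rw [hdiff, setAverage_eq, smul_eq_mul, neg_sq, mul_pow]
  calc V⁻¹ ^ 2 * (∫ s in t..1, H s) ^ 2 ≤ V⁻¹ ^ 2 * (V * R ^ 2 * I * J) := by gcongr
    _ = R ^ 2 * J * (V⁻¹ * I) := by field_simp

end HaarMeasure

theorem norm_gradient {F : Type*} [NormedAddCommGroup F] [InnerProductSpace ℝ F] [CompleteSpace F]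
    (f : F → ℝ) (x : F) : ‖gradient f x‖ = ‖fderiv ℝ f x‖ :=
  (InnerProductSpace.toDual ℝ F).symm.norm_map _

theorem integral_mul_uball {d : ℕ} (x₀ : Euc d) (ρ : ℝ) (g : Euc d → ℝ) :
    ∫ x, g x * uball x₀ ρ x = ⨍ x in closedBall x₀ ρ, g x := by
  simp only [uball, ← Set.indicator_mul_right]
  rw [integral_indicator measurableSet_closedBall, integral_mul_const, setAverage_eq, smul_eq_mul,
    measureReal_def, mul_comm]

end

theorem mean_difference_concentric_uniform_general
    (d : ℕ) (x₀ : Euc d) (r R : ℝ) (hr : 0 < r) (hrR : r ≤ R)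
    (f : Euc d → ℝ) (hf : ContDiff ℝ 1 f) :
    (d = 1 →
      ((∫ x, f x * uball x₀ r x) - ∫ x, f x * uball x₀ R x) ^ 2
        ≤ R ^ 2 * Real.log (R / r) * ∫ x, ‖gradient f x‖ ^ 2 * uball x₀ R x) ∧
    (2 ≤ d →
      ((∫ x, f x * uball x₀ r x) - ∫ x, f x * uball x₀ R x) ^ 2
        ≤ (R ^ (d + 1) / (((d : ℝ) - 1) * r ^ (d - 1))) *
            ∫ x, ‖gradient f x‖ ^ 2 * uball x₀ R x) := by
  have hR : 0 < R := hr.trans_le hrR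
  have key := sq_setAverage_closedBall_sub_le volume hf x₀ hr hrR
  rw [finrank_euclideanSpace_fin] at key
  have hgrad : 0 ≤ ∫ x, ‖gradient f x‖ ^ 2 * uball x₀ R x :=
    integral_nonneg fun x => mul_nonneg (sq_nonneg _)
      (Set.indicator_nonneg (fun _ _ => inv_nonneg.2 ENNReal.toReal_nonneg) x)
  simp only [integral_mul_uball, norm_gradient] at hgrad ⊢
  refine ⟨fun hd => ?_, fun hd => ?_⟩
  · subst hd
    simpa [integral_inv_of_pos (div_pos hr hR) one_pos, one_div_div] using key
  · refine key.trans (mul_le_mul_of_nonneg_right ?_ hgrad)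
    have hd1 : (0 : ℝ) < d - 1 := by
      have : (2 : ℝ) ≤ d := by exact_mod_cast hd
      linarith
    calc R ^ 2 * ∫ s in r / R..1, (s ^ d)⁻¹
        ≤ R ^ 2 * (((r / R) ^ (d - 1))⁻¹ / ((d : ℝ) - 1)) :=
          mul_le_mul_of_nonneg_left (intervalIntegral_inv_pow_le hd (div_pos hr hR)) (sq_nonneg R)
      _ = R ^ (d + 1) / (((d : ℝ) - 1) * r ^ (d - 1)) := by
          rw [show d + 1 = (d - 1) + 2 by omega, pow_add, div_pow]
          field_simp

/-- mean difference between uniform distributions on concentric balls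
(Lemma 4.5 of the paper): for `0 < r ≤ R`,
`(E_{u_{B_r}}[f] − E_{u_{B_R}}[f])² ≤ R² log(R/r) ∫ ‖∇f‖² u_{B_R}` when `d = 1`, and
`(E_{u_{B_r}}[f] − E_{u_{B_R}}[f])² ≤ (R^{d+1}/((d−1) r^{d−1})) ∫ ‖∇f‖² u_{B_R}`
when `d ≥ 2`. -/
theorem mean_difference_concentric_uniform
    (d : ℕ) (hd : 1 ≤ d) (x₀ : Euc d) (r R : ℝ) (hr : 0 < r) (hrR : r ≤ R)
    (f : Euc d → ℝ) (hf : ContDiff ℝ 1 f) :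
    (d = 1 →
      ((∫ x, f x * uball x₀ r x) - ∫ x, f x * uball x₀ R x) ^ 2
        ≤ R ^ 2 * Real.log (R / r) * ∫ x, ‖gradient f x‖ ^ 2 * uball x₀ R x) ∧
    (2 ≤ d →
      ((∫ x, f x * uball x₀ r x) - ∫ x, f x * uball x₀ R x) ^ 2
        ≤ (R ^ (d + 1) / (((d : ℝ) - 1) * r ^ (d - 1))) *
            ∫ x, ‖gradient f x‖ ^ 2 * uball x₀ R x) :=
  mean_difference_concentric_uniform_general d x₀ r R hr hrR f hf
end
end
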